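/- arXiv:1012.0826 — 6 statements merged into one kernel-verified Lean document; each statement's English description precedes it below -/
import Mathlib

section
/- Under the recursion setup (with all marginals of G_{m,k} equal to g_{m,k}), for all integers 0 ≤ m < n and all x ∈ ℝ, the lower recursion bound holds: F̄_n^m(x) ≥ ∑_{k≥1} p_{m,k} · ∫_ℝ Q_{1,k}(F̄_n^{m+1}(x − y)) dg_{m,k}(y), where Q_{1,k}(u) = 1 − (1−u)^k. -/
open MeasureTheory Set Filter

/-! The recursion writes `1 - F̄_n^m(x)` as `∑ₖ p_{m,k} E[∏ᵢ h(yᵢ)]` with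
`h y = 1 - F̄_n^{m+1}(x - y) ∈ [0,1]`. By AM-GM, `∏ᵢ h(yᵢ) ≤ (1/k) ∑ᵢ h(yᵢ)^k`, and since
every marginal of `G_{m,k}` is `g_{m,k}`, the expectation of the right side is
`∫ h^k dg_{m,k}`. Summing against `p_{m,·}` gives the bound, because
`1 - ∫ h^k dg_{m,k} = ∫ Q_{1,k}(F̄_n^{m+1}(x - y)) dg_{m,k}`. -/

theorem Real.card_mul_prod_le_sum_pow_card {ι : Type*} [Fintype ι] {a : ι → ℝ}
    (ha : ∀ i, 0 ≤ a i) :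
    Fintype.card ι * ∏ i, a i ≤ ∑ i, a i ^ Fintype.card ι := by
  set k := Fintype.card ι
  rcases Nat.eq_zero_or_pos k with hk | hk
  · simp [hk]
  have hk' : (k : ℝ) ≠ 0 := by positivity
  have amgm := Real.geom_mean_le_arith_mean_weighted Finset.univ (fun _ => (k : ℝ)⁻¹)
    (fun i => a i ^ k) (fun _ _ => by positivity) (by simp [k, hk'])
    (fun i _ => pow_nonneg (ha i) k)
  have hroot : ∀ i, (a i ^ k) ^ (k : ℝ)⁻¹ = a i := fun i => by
    rw [← Real.rpow_natCast, ← Real.rpow_mul (ha i), mul_inv_cancel₀ hk', Real.rpow_one]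
  simp only [hroot, ← Finset.mul_sum] at amgm
  calc (k : ℝ) * ∏ i, a i ≤ k * ((k : ℝ)⁻¹ * ∑ i, a i ^ k) := by gcongr
    _ = ∑ i, a i ^ k := by field_simp

theorem MeasureTheory.integral_prod_le_integral_pow_card {ι α : Type*} [Fintype ι]
    [MeasurableSpace α] {G : Measure (ι → α)} [IsProbabilityMeasure G] {μ : Measure α}
    [IsProbabilityMeasure μ] (hmarg : ∀ i, G.map (fun y => y i) = μ) {h : α → ℝ}
    (hh : Measurable h) (h01 : ∀ t, h t ∈ Icc (0 : ℝ) 1) :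
    ∫ y, ∏ i, h (y i) ∂G ≤ ∫ t, h t ^ Fintype.card ι ∂μ := by
  set k := Fintype.card ι
  rcases Nat.eq_zero_or_pos k with hk | hk
  · have : IsEmpty ι := Fintype.card_eq_zero_iff.mp hk
    simp [hk]
  have hpow_int : ∀ i, Integrable (fun y : ι → α => h (y i) ^ k) G := fun i =>
    .of_bound ((hh.comp (measurable_pi_apply i)).pow_const k).aestronglyMeasurable 1
      (ae_of_all _ fun y => by
        rw [norm_pow, Real.norm_of_nonneg (h01 _).1]
        exact pow_le_one₀ (h01 _).1 (h01 _).2)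
  have hmarg_int : ∀ i, ∫ y, h (y i) ^ k ∂G = ∫ t, h t ^ k ∂μ := fun i => by
    rw [← hmarg i, integral_map (measurable_pi_apply i).aemeasurable
      (hh.pow_const k).aestronglyMeasurable]
  refine le_of_mul_le_mul_left ?_ (Nat.cast_pos.mpr hk : (0 : ℝ) < k)
  calc (k : ℝ) * ∫ y, ∏ i, h (y i) ∂G = ∫ y, k * ∏ i, h (y i) ∂G :=
        (integral_const_mul _ _).symm
    _ ≤ ∫ y, ∑ i, h (y i) ^ k ∂G :=
      integral_mono_of_nonneg (ae_of_all _ fun y => mul_nonneg k.cast_nonneg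
          (Finset.prod_nonneg fun i _ => (h01 (y i)).1))
        (integrable_finsetSum _ fun i _ => hpow_int i)
        (ae_of_all _ fun y => Real.card_mul_prod_le_sum_pow_card fun i => (h01 (y i)).1)
    _ = k * ∫ t, h t ^ k ∂μ := by
      rw [integral_finsetSum _ fun i _ => hpow_int i]
      simp [hmarg_int, k]

theorem tsum_mul_one_sub_le_one_sub_tsum_mul {ι : Type*} {p a b : ι → ℝ} (hp : ∀ k, 0 ≤ p k)
    (hsum : HasSum p 1) (ha : ∀ k, 0 ≤ a k) (hab : ∀ k, a k ≤ b k) (hb : ∀ k, b k ≤ 1) :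
    ∑' k, p k * (1 - b k) ≤ 1 - ∑' k, p k * a k := by
  have hsum_mul : ∀ {c : ι → ℝ}, (∀ k, 0 ≤ c k) → (∀ k, c k ≤ 1) →
      Summable (fun k => p k * c k) :=
    fun hc0 hc1 => hsum.summable.of_nonneg_of_le (fun k => mul_nonneg (hp k) (hc0 k))
      (fun k => mul_le_of_le_one_right (hp k) (hc1 k))
  have hpa := hsum_mul ha fun k => (hab k).trans (hb k)
  have hpb := hsum_mul (fun k => (ha k).trans (hab k)) hb
  calc ∑' k, p k * (1 - b k) = 1 - ∑' k, p k * b k := by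
        simp_rw [mul_one_sub]
        rw [hsum.summable.tsum_sub hpb, hsum.tsum_eq]
    _ ≤ 1 - ∑' k, p k * a k :=
        sub_le_sub_left
          (hpa.tsum_le_tsum (fun k => mul_le_mul_of_nonneg_left (hab k) (hp k)) hpb) _

theorem stmt_1_general
    (p : ℕ → ℕ → ℝ)
    (G : (n : ℕ) → (k : ℕ) → Measure (Fin k → ℝ))
    (g : ℕ → ℕ → Measure ℝ)
    (hpnonneg : ∀ n k, 0 ≤ p n k)
    (hpsum : ∀ n, HasSum (p n) 1)
    (hGprob : ∀ n k, IsProbabilityMeasure (G n k))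
    (hgprob : ∀ n k, IsProbabilityMeasure (g n k))
    (hmarg : ∀ n k (i : Fin k), (G n k).map (fun y => y i) = g n k)
    (F : ℕ → ℕ → ℝ → ℝ)
    (hF01 : ∀ n m, m ≤ n → ∀ x, F n m x ∈ Icc (0 : ℝ) 1)
    (hFanti : ∀ n m, m ≤ n → Antitone (F n m))
    (hrec : ∀ n m, m < n → ∀ x : ℝ,
      F n m x = 1 - ∑' k : ℕ, p m k *
        ∫ y : Fin k → ℝ, (∏ i, (1 - F n (m + 1) (x - y i))) ∂(G m k))
    (n m : ℕ) (hmn : m < n) (x : ℝ) :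
    ∑' k : ℕ, p m k * ∫ y : ℝ, (1 - (1 - F n (m + 1) (x - y)) ^ k) ∂(g m k) ≤ F n m x := by
  set h : ℝ → ℝ := fun y => 1 - F n (m + 1) (x - y)
  have hh : Measurable h := measurable_const.sub
    ((hFanti n (m + 1) hmn).measurable.comp (measurable_const.sub measurable_id))
  have h01 : ∀ y, h y ∈ Icc (0 : ℝ) 1 := fun y => by
    obtain ⟨h0, h1⟩ := hF01 n (m + 1) hmn (x - y)
    exact ⟨by linarith, by linarith⟩
  have hpow_norm : ∀ k y, ‖h y ^ k‖ ≤ 1 := fun k y => by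
    rw [norm_pow, Real.norm_of_nonneg (h01 y).1]
    exact pow_le_one₀ (h01 y).1 (h01 y).2
  have hpow_le_one : ∀ k, ∫ y, h y ^ k ∂(g m k) ≤ 1 := fun k => by
    have := hgprob m k
    simpa using (le_abs_self _).trans
      (norm_integral_le_of_norm_le_const (μ := g m k) (ae_of_all _ (hpow_norm k)))
  have hint_sub : ∀ k, ∫ y, (1 - (1 - F n (m + 1) (x - y)) ^ k) ∂(g m k) =
      1 - ∫ y, h y ^ k ∂(g m k) := fun k => by
    have := hgprob m k
    rw [integral_sub (integrable_const 1)
      (.of_bound (hh.pow_const k).aestronglyMeasurable 1 (ae_of_all _ (hpow_norm k)))]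
    simp
  rw [hrec n m hmn x]
  simp only [hint_sub]
  exact tsum_mul_one_sub_le_one_sub_tsum_mul (hpnonneg m) (hpsum m)
    (fun k => integral_nonneg fun y => Finset.prod_nonneg fun i _ => (h01 (y i)).1)
    (fun k => by simpa using integral_prod_le_integral_pow_card (hmarg m k) hh h01)
    hpow_le_one

/-- STATEMENT 0: Under the recursion setup (all marginals of `G m k` equal `g m k`),
for all `0 ≤ m < n` and all real `x`, the lower recursion bound
`F̄_n^m(x) ≥ ∑_{k≥1} p_{m,k} ∫ Q_{1,k}(F̄_n^{m+1}(x−y)) dg_{m,k}(y)` holds,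
where `Q_{1,k}(u) = 1 − (1−u)^k`. -/
theorem stmt_1
    (p : ℕ → ℕ → ℝ)
    (G : (n : ℕ) → (k : ℕ) → Measure (Fin k → ℝ))
    (g : ℕ → ℕ → Measure ℝ)
    (hp0 : ∀ n, p n 0 = 0)
    (hpnonneg : ∀ n k, 0 ≤ p n k)
    (hpsum : ∀ n, HasSum (p n) 1)
    (hpmean : ∀ n, Summable (fun k : ℕ => (k : ℝ) * p n k))
    (hGprob : ∀ n k, IsProbabilityMeasure (G n k))
    (hgprob : ∀ n k, IsProbabilityMeasure (g n k))
    (hmarg : ∀ n k (i : Fin k), (G n k).map (fun y => y i) = g n k)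
    (F : ℕ → ℕ → ℝ → ℝ)
    (hF01 : ∀ n m, m ≤ n → ∀ x, F n m x ∈ Icc (0 : ℝ) 1)
    (hFanti : ∀ n m, m ≤ n → Antitone (F n m))
    (hFrc : ∀ n m, m ≤ n → ∀ x, ContinuousWithinAt (F n m) (Ici x) x)
    (hFn1 : ∀ n (x : ℝ), x < 0 → F n n x = 1)
    (hFn0 : ∀ n (x : ℝ), 0 ≤ x → F n n x = 0)
    (hrec : ∀ n m, m < n → ∀ x : ℝ,
      F n m x = 1 - ∑' k : ℕ, p m k *
        ∫ y : Fin k → ℝ, (∏ i, (1 - F n (m + 1) (x - y i))) ∂(G m k))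
    (n m : ℕ) (hmn : m < n) (x : ℝ) :
    ∑' k : ℕ, p m k * ∫ y : ℝ, (1 - (1 - F n (m + 1) (x - y)) ^ k) ∂(g m k) ≤ F n m x :=
  stmt_1_general p G g hpnonneg hpsum hGprob hgprob hmarg F hF01 hFanti hrec n m hmn x
end

section
/- Under assumption (GT): for every η₁ > 0, taking B as in (GT), for all integers 0 ≤ m < n and all x ∈ ℝ one has the upper pointwise bound F̄_n^m(x) ≤ Q_m(F̄_n^{m+1}(x − B)) + η₁, where Q_m(u) = ∑_{k≥1} p_{m,k}·(1 − (1−u)^k). -/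
open MeasureTheory Set Filter

/-!
Write `u = F̄_n^{m+1}(x − B)` and `h(t) = 1 − F̄_n^{m+1}(x − t)`, a nonincreasing function with
values in `[0, 1]`. On the event `{y | ∀ i, y i ≤ B}`, of `G_{m,k}`-mass at least `1 − η₁`, every
factor `h (y i)` is at least `h B = 1 − u`, so the `k`-th integral in the recursion is at least
`(1 − u)^k (1 − η₁)`. Averaging over `k` with weights `p_{m,k}` gives
`F̄_n^m(x) ≤ 1 − (1 − η₁) T ≤ (1 − T) + η₁` with `T = ∑ p_{m,k} (1 − u)^k ≤ 1`,
and `1 − T = Q_m(u)`.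
-/

section Integral

variable {k : ℕ} (μ : Measure (Fin k → ℝ)) {h : ℝ → ℝ}

theorem prod_mem_Icc_of_mem_Icc (h01 : ∀ t, h t ∈ Icc (0 : ℝ) 1) (y : Fin k → ℝ) :
    ∏ i, h (y i) ∈ Icc (0 : ℝ) 1 :=
  ⟨Finset.prod_nonneg fun i _ => (h01 (y i)).1,
    Finset.prod_le_one (fun i _ => (h01 (y i)).1) fun i _ => (h01 (y i)).2⟩

theorem integral_prod_mem_Icc [IsProbabilityMeasure μ] (h01 : ∀ t, h t ∈ Icc (0 : ℝ) 1) :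
    ∫ y, ∏ i, h (y i) ∂μ ∈ Icc (0 : ℝ) 1 := by
  refine ⟨integral_nonneg fun y => (prod_mem_Icc_of_mem_Icc h01 y).1, ?_⟩
  calc ∫ y, ∏ i, h (y i) ∂μ ≤ ∫ _, (1 : ℝ) ∂μ :=
        integral_mono_of_nonneg (.of_forall fun y => (prod_mem_Icc_of_mem_Icc h01 y).1)
          (integrable_const 1) (.of_forall fun y => (prod_mem_Icc_of_mem_Icc h01 y).2)
    _ = 1 := by simp

theorem pow_mul_measureReal_le_integral_prod [IsFiniteMeasure μ] (hanti : Antitone h)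
    (h01 : ∀ t, h t ∈ Icc (0 : ℝ) 1) (B : ℝ) :
    h B ^ k * μ.real {y | ∀ i, y i ≤ B} ≤ ∫ y, ∏ i, h (y i) ∂μ := by
  set S : Set (Fin k → ℝ) := {y | ∀ i, y i ≤ B}
  have hS : MeasurableSet S := by
    simp only [S, ofPred_forall]
    exact .iInter fun i => measurableSet_le (measurable_pi_apply i) measurable_const
  have hint : Integrable (fun y : Fin k → ℝ => ∏ i, h (y i)) μ := by
    refine (integrable_const (1 : ℝ)).mono' (Finset.measurable_prod _ fun i _ =>
      hanti.measurable.comp (measurable_pi_apply i)).aestronglyMeasurable (.of_forall fun y => ?_)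
    rw [Real.norm_eq_abs, abs_of_nonneg (prod_mem_Icc_of_mem_Icc h01 y).1]
    exact (prod_mem_Icc_of_mem_Icc h01 y).2
  calc h B ^ k * μ.real S = ∫ _ in S, h B ^ k ∂μ := by rw [setIntegral_const, smul_eq_mul, mul_comm]
    _ ≤ ∫ y in S, ∏ i, h (y i) ∂μ := by
      refine setIntegral_mono_on (integrableOn_const (measure_ne_top _ _)) hint.integrableOn hS
        fun y hy => ?_
      rw [← Fin.prod_const]
      exact Finset.prod_le_prod (fun i _ => (h01 B).1) fun i _ => hanti (hy i)
    _ ≤ ∫ y, ∏ i, h (y i) ∂μ :=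
      setIntegral_le_integral hint (.of_forall fun y => (prod_mem_Icc_of_mem_Icc h01 y).1)

end Integral

section Series

variable {p v : ℕ → ℝ}

theorem summable_mul_of_mem_Icc (hp : Summable p) (hp0 : ∀ k, 0 ≤ p k)
    (hv : ∀ k, v k ∈ Icc (0 : ℝ) 1) : Summable fun k => p k * v k :=
  hp.of_norm_bounded fun k => by
    rw [Real.norm_eq_abs, abs_of_nonneg (mul_nonneg (hp0 k) (hv k).1)]
    exact mul_le_of_le_one_right (hp0 k) (hv k).2

theorem one_sub_tsum_mul_le {I : ℕ → ℝ} {η : ℝ} (hp : HasSum p 1) (hp0 : ∀ k, 0 ≤ p k)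
    (hv : ∀ k, v k ∈ Icc (0 : ℝ) 1) (hI : ∀ k, I k ∈ Icc (0 : ℝ) 1) (hη : 0 ≤ η)
    (hvI : ∀ k, p k ≠ 0 → v k * (1 - η) ≤ I k) :
    1 - ∑' k, p k * I k ≤ ∑' k, p k * (1 - v k) + η := by
  have hpv := summable_mul_of_mem_Icc hp.summable hp0 hv
  have hpI := summable_mul_of_mem_Icc hp.summable hp0 hI
  have hT_le : ∑' k, p k * v k ≤ 1 := by
    rw [← hp.tsum_eq]
    exact hpv.tsum_le_tsum (fun k => mul_le_of_le_one_right (hp0 k) (hv k).2) hp.summable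
  have hQ : ∑' k, p k * (1 - v k) = 1 - ∑' k, p k * v k := by
    simp only [mul_one_sub]
    rw [hp.summable.tsum_sub hpv, hp.tsum_eq]
  have hTI : (∑' k, p k * v k) * (1 - η) ≤ ∑' k, p k * I k := by
    rw [← tsum_mul_right]
    refine (hpv.mul_right _).tsum_le_tsum (fun k => ?_) hpI
    by_cases hk : p k = 0
    · simp [hk]
    · rw [mul_assoc]
      exact mul_le_mul_of_nonneg_left (hvI k hk) (hp0 k)
  rw [hQ]
  nlinarith [mul_le_mul_of_nonneg_right hT_le hη]

end Series

theorem stmt_5_general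
    (p : ℕ → ℕ → ℝ)
    (G : (n : ℕ) → (k : ℕ) → Measure (Fin k → ℝ))
    (hpnonneg : ∀ n k, 0 ≤ p n k)
    (hpsum : ∀ n, HasSum (p n) 1)
    (hGprob : ∀ n k, IsProbabilityMeasure (G n k))
    (F : ℕ → ℕ → ℝ → ℝ)
    (hF01 : ∀ n m, m ≤ n → ∀ x, F n m x ∈ Icc (0 : ℝ) 1)
    (hFanti : ∀ n m, m ≤ n → Antitone (F n m))
    (hrec : ∀ n m, m < n → ∀ x : ℝ,
      F n m x = 1 - ∑' k : ℕ, p m k *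
        ∫ y : Fin k → ℝ, (∏ i, (1 - F n (m + 1) (x - y i))) ∂(G m k))
    -- `B` as provided by assumption (GT) for the given `η₁`
    (η₁ : ℝ) (hη₁ : 0 < η₁) (B : ℝ)
    (hGT : ∀ n k, p n k ≠ 0 →
      1 - η₁ ≤ ((G n k) {y | ∀ i, y i ≤ B}).toReal ∧
      1 - η₁ ≤ ((G n k) {y | ∀ i, -B ≤ y i}).toReal)
    (n m : ℕ) (hmn : m < n) (x : ℝ) :
    F n m x ≤ (∑' k : ℕ, p m k * (1 - (1 - F n (m + 1) (x - B)) ^ k)) + η₁ := by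
  have hm : m + 1 ≤ n := hmn
  have hanti : Antitone fun t => 1 - F n (m + 1) (x - t) := fun a b hab =>
    sub_le_sub_left (hFanti n (m + 1) hm (sub_le_sub_left hab x)) 1
  have h01 : ∀ t, 1 - F n (m + 1) (x - t) ∈ Icc (0 : ℝ) 1 := fun t =>
    ⟨sub_nonneg.2 (hF01 n (m + 1) hm _).2, sub_le_self _ (hF01 n (m + 1) hm _).1⟩
  rw [hrec n m hmn x]
  refine one_sub_tsum_mul_le (hpsum m) (hpnonneg m)
    (fun k => ⟨pow_nonneg (h01 B).1 k, pow_le_one₀ (h01 B).1 (h01 B).2⟩)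
    (fun k => have := hGprob m k; integral_prod_mem_Icc (G m k) h01) hη₁.le fun k hk => ?_
  have := hGprob m k
  calc (1 - F n (m + 1) (x - B)) ^ k * (1 - η₁)
      ≤ (1 - F n (m + 1) (x - B)) ^ k * (G m k).real {y | ∀ i, y i ≤ B} :=
        mul_le_mul_of_nonneg_left (hGT m k hk).1 (pow_nonneg (h01 B).1 k)
    _ ≤ _ := pow_mul_measureReal_le_integral_prod (G m k) hanti h01 B

/-- Under assumption (GT): for every `η₁ > 0`, taking `B` as in (GT),
for all `0 ≤ m < n` and all `x` one has the upper pointwise bound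
`F̄_n^m(x) ≤ Q_m(F̄_n^{m+1}(x − B)) + η₁`, where
`Q_m(u) = ∑_{k≥1} p_{m,k}·(1 − (1−u)^k)`. -/
theorem stmt_5
    (p : ℕ → ℕ → ℝ)
    (G : (n : ℕ) → (k : ℕ) → Measure (Fin k → ℝ))
    (g : ℕ → ℕ → Measure ℝ)
    (hp0 : ∀ n, p n 0 = 0)
    (hpnonneg : ∀ n k, 0 ≤ p n k)
    (hpsum : ∀ n, HasSum (p n) 1)
    (hpmean : ∀ n, Summable (fun k : ℕ => (k : ℝ) * p n k))
    (hGprob : ∀ n k, IsProbabilityMeasure (G n k))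
    (hgprob : ∀ n k, IsProbabilityMeasure (g n k))
    (hmarg : ∀ n k (i : Fin k), (G n k).map (fun y => y i) = g n k)
    (F : ℕ → ℕ → ℝ → ℝ)
    (hF01 : ∀ n m, m ≤ n → ∀ x, F n m x ∈ Icc (0 : ℝ) 1)
    (hFanti : ∀ n m, m ≤ n → Antitone (F n m))
    (hFrc : ∀ n m, m ≤ n → ∀ x, ContinuousWithinAt (F n m) (Ici x) x)
    (hFn1 : ∀ n (x : ℝ), x < 0 → F n n x = 1)
    (hFn0 : ∀ n (x : ℝ), 0 ≤ x → F n n x = 0)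
    (hrec : ∀ n m, m < n → ∀ x : ℝ,
      F n m x = 1 - ∑' k : ℕ, p m k *
        ∫ y : Fin k → ℝ, (∏ i, (1 - F n (m + 1) (x - y i))) ∂(G m k))
    -- `B` as provided by assumption (GT) for the given `η₁`
    (η₁ : ℝ) (hη₁ : 0 < η₁) (B : ℝ) (hB : 0 < B)
    (hGT : ∀ n k, p n k ≠ 0 →
      1 - η₁ ≤ ((G n k) {y | ∀ i, y i ≤ B}).toReal ∧
      1 - η₁ ≤ ((G n k) {y | ∀ i, -B ≤ y i}).toReal)
    (n m : ℕ) (hmn : m < n) (x : ℝ) :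
    F n m x ≤ (∑' k : ℕ, p m k * (1 - (1 - F n (m + 1) (x - B)) ^ k)) + η₁ :=
  stmt_5_general p G hpnonneg hpsum hGprob F hF01 hFanti hrec η₁ hη₁ B hGT n m hmn x
end

section
/- Property (T1'): Q(x) > x for all x ∈ (0,1), and for every δ ∈ (0,1), setting c_δ = 1 + (m₀−1)·δ/k₀ > 1, one has Q(x) > c_δ·x for all x ∈ (0, 1−δ]. -/
open Set

lemma stmt7_key
    (k₀ : ℕ) (hk₀ : 1 < k₀)
    (m₀ : ℝ) (hm₀ : 1 < m₀)
    (p : ℕ → ℝ) (hp : ∀ k ∈ Finset.Icc 1 k₀, 0 ≤ p k)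
    (hpsum : ∑ k ∈ Finset.Icc 1 k₀, p k = 1)
    (hpmean : m₀ < ∑ k ∈ Finset.Icc 1 k₀, (k : ℝ) * p k)
    (Q : ℝ → ℝ) (hQ : ∀ x, Q x = ∑ k ∈ Finset.Icc 1 k₀, p k * (1 - (1 - x) ^ k))
    (δ : ℝ) (hδ0 : 0 < δ) (hδ1 : δ < 1)
    (x : ℝ) (hx0 : 0 < x) (hx1 : x ≤ 1 - δ) :
    (1 + (m₀ - 1) * δ / k₀) * x < Q x := by
  have hk0R : (0 : ℝ) < k₀ := by positivity
  set y : ℝ := 1 - x with hy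
  have hyδ : δ ≤ y := by simp [hy]; linarith
  have hy0 : 0 < y := lt_of_lt_of_le hδ0 hyδ
  -- pointwise lower bound
  have hterm : ∀ k ∈ Finset.Icc 1 k₀,
      p k * (x * (1 + ((k : ℝ) - 1) * (δ / k₀))) ≤ p k * (1 - y ^ k) := by
    intro k hk
    apply mul_le_mul_of_nonneg_left _ (hp k hk)
    obtain ⟨hk1, hk2⟩ := Finset.mem_Icc.mp hk
    have hgeom : 1 - y ^ k = (∑ i ∈ Finset.range k, y ^ i) * x := by
      have h := geom_sum_mul y k
      rw [hy] at h ⊢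
      linear_combination h
    rw [hgeom]
    have hS : 1 + ((k : ℝ) - 1) * (δ / k₀) ≤ ∑ i ∈ Finset.range k, y ^ i := by
      rcases eq_or_lt_of_le hk1 with h1 | h2
      · subst h1; simp
      · -- k ≥ 2
        have hsub : ({0, 1} : Finset ℕ) ⊆ Finset.range k := by
          intro i hi
          simp only [Finset.mem_insert, Finset.mem_singleton] at hi
          rcases hi with rfl | rfl <;> simp [Finset.mem_range] <;> omega
        have h01 : (1 : ℝ) + y ≤ ∑ i ∈ Finset.range k, y ^ i := by
          have := Finset.sum_le_sum_of_subset_of_nonneg hsub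
            (fun i _ _ => pow_nonneg hy0.le i)
          simpa using this
        have hfrac : ((k : ℝ) - 1) * (δ / k₀) ≤ δ := by
          have hkk : (k : ℝ) ≤ k₀ := by exact_mod_cast hk2
          rw [div_eq_mul_inv]
          have h1 : ((k : ℝ) - 1) * (δ * (k₀ : ℝ)⁻¹) ≤ (k₀ : ℝ) * (δ * (k₀ : ℝ)⁻¹) := by
            apply mul_le_mul_of_nonneg_right (by linarith) (by positivity)
          calc ((k : ℝ) - 1) * (δ * (k₀ : ℝ)⁻¹) ≤ (k₀ : ℝ) * (δ * (k₀ : ℝ)⁻¹) := h1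
            _ = δ := by field_simp
        linarith
    calc x * (1 + ((k : ℝ) - 1) * (δ / k₀))
        ≤ x * (∑ i ∈ Finset.range k, y ^ i) := by
          apply mul_le_mul_of_nonneg_left hS hx0.le
      _ = (∑ i ∈ Finset.range k, y ^ i) * x := by ring
  have hsumle : ∑ k ∈ Finset.Icc 1 k₀, p k * (x * (1 + ((k : ℝ) - 1) * (δ / k₀)))
      ≤ Q x := by
    rw [hQ]
    exact Finset.sum_le_sum hterm
  have hsumeq : ∑ k ∈ Finset.Icc 1 k₀, p k * (x * (1 + ((k : ℝ) - 1) * (δ / k₀)))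
      = x + ((∑ k ∈ Finset.Icc 1 k₀, (k : ℝ) * p k) - 1) * (x * (δ / k₀)) := by
    have : ∀ k ∈ Finset.Icc 1 k₀,
        p k * (x * (1 + ((k : ℝ) - 1) * (δ / k₀)))
        = p k * x + ((k : ℝ) * p k) * (x * (δ / k₀)) - p k * (x * (δ / k₀)) := by
      intro k _; ring
    rw [Finset.sum_congr rfl this]
    rw [Finset.sum_sub_distrib, Finset.sum_add_distrib,
      ← Finset.sum_mul, ← Finset.sum_mul, ← Finset.sum_mul, hpsum]
    ring
  rw [hsumeq] at hsumle
  have hpos : 0 < x * (δ / k₀) := by positivity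
  have h3 : (m₀ - 1) * (x * (δ / k₀)) < ((∑ k ∈ Finset.Icc 1 k₀, (k : ℝ) * p k) - 1) * (x * (δ / k₀)) := by
    apply mul_lt_mul_of_pos_right _ hpos
    linarith
  have heq : (1 + (m₀ - 1) * δ / k₀) * x = x + (m₀ - 1) * (x * (δ / k₀)) := by
    field_simp
  linarith

/-- Property (T1'): `Q(x) > x` for all `x ∈ (0,1)`, and for every
`δ ∈ (0,1)`, setting `c_δ = 1 + (m₀−1)·δ/k₀ > 1`, one has `Q(x) > c_δ·x` for all
`x ∈ (0, 1−δ]`, where `Q(x) = ∑_{k=1}^{k₀} p_k·(1 − (1−x)^k)`. -/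
theorem stmt_7
    (k₀ : ℕ) (hk₀ : 1 < k₀)
    (m₀ : ℝ) (hm₀ : 1 < m₀)
    (p : ℕ → ℝ) (hp : ∀ k ∈ Finset.Icc 1 k₀, 0 ≤ p k)
    (hpsum : ∑ k ∈ Finset.Icc 1 k₀, p k = 1)
    (hpmean : m₀ < ∑ k ∈ Finset.Icc 1 k₀, (k : ℝ) * p k)
    (Q : ℝ → ℝ) (hQ : ∀ x, Q x = ∑ k ∈ Finset.Icc 1 k₀, p k * (1 - (1 - x) ^ k)) :
    (∀ x : ℝ, x ∈ Ioo (0 : ℝ) 1 → x < Q x) ∧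
    (∀ δ : ℝ, δ ∈ Ioo (0 : ℝ) 1 →
      1 < 1 + (m₀ - 1) * δ / k₀ ∧
      ∀ x : ℝ, x ∈ Ioc (0 : ℝ) (1 - δ) → (1 + (m₀ - 1) * δ / k₀) * x < Q x) := by
  have hk0R : (0 : ℝ) < k₀ := by positivity
  constructor
  · intro x hx
    obtain ⟨hx0, hx1⟩ := hx
    have h := stmt7_key k₀ hk₀ m₀ hm₀ p hp hpsum hpmean Q hQ (1 - x)
      (by linarith) (by linarith) x hx0 (by linarith)
    have hc : 0 < (m₀ - 1) * (1 - x) / k₀ :=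
      div_pos (mul_pos (by linarith) (by linarith)) hk0R
    nlinarith
  · intro δ hδ
    obtain ⟨hδ0, hδ1⟩ := hδ
    constructor
    · have : 0 < (m₀ - 1) * δ / k₀ :=
        div_pos (mul_pos (by linarith) hδ0) hk0R
      linarith
    · intro x hx
      exact stmt7_key k₀ hk₀ m₀ hm₀ p hp hpsum hpmean Q hQ δ hδ0 hδ1 x hx.1 hx.2
end

section
/- Property (T2'): for each δ ∈ (0,1), the function g_δ(ε) = ((1 − (1−δ)^{k₀})/(k₀·δ)) · ((1+ε)/(δ+ε))^{k₀−1} · ε is nonnegative with g_δ(ε) → 0 as ε → 0+, and for every ε > 0 and every x with x ≥ δ and (1 + g_δ(ε))·x ≤ 1: if Q((1 + g_δ(ε))·x) ≤ (1−δ)/(1+ε), then Q((1 + g_δ(ε))·x) ≥ (1+ε)·Q(x). -/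
open Set Filter

theorem aux_pow_sub_pow' (u T : ℝ) (hu : 0 ≤ u) (huT : u ≤ T) :
    ∀ k : ℕ, ((k : ℝ) + 1) * u ^ k * (T - u) ≤ T ^ (k + 1) - u ^ (k + 1) := by
  intro k
  induction k with
  | zero => simp
  | succ n ih =>
    have hun : (0:ℝ) ≤ u ^ n := pow_nonneg hu n
    have hT : 0 ≤ T := hu.trans huT
    have hTu : 0 ≤ T - u := sub_nonneg.2 huT
    have key : T ^ (n + 2) - u ^ (n + 2) = T * (T ^ (n+1) - u ^ (n+1)) + (T - u) * u ^ (n+1) := by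
      ring
    have hnn : (0:ℝ) ≤ ((n:ℝ) + 1) * u ^ n * (T - u) := by
      apply mul_nonneg (mul_nonneg (by positivity) hun) hTu
    have h2 : u * (((n:ℝ) + 1) * u ^ n * (T - u)) ≤ T * (T ^ (n+1) - u ^ (n+1)) :=
      (mul_le_mul_of_nonneg_right huT hnn).trans (mul_le_mul_of_nonneg_left ih hT)
    have h2' : ((n:ℝ) + 1) * u ^ (n+1) * (T - u) ≤ T * (T ^ (n+1) - u ^ (n+1)) := by
      calc ((n:ℝ) + 1) * u ^ (n+1) * (T - u) = u * (((n:ℝ) + 1) * u ^ n * (T - u)) := by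
            rw [pow_succ]; ring
        _ ≤ _ := h2
    have hX : (0:ℝ) ≤ (T - u) * u ^ (n+1) := mul_nonneg hTu (pow_nonneg hu _)
    rw [key]
    push_cast
    nlinarith [h2', hX]

theorem aux_pow_sub_pow (u T : ℝ) (hu : 0 ≤ u) (huT : u ≤ T) (k : ℕ) (hk : 1 ≤ k) :
    (k : ℝ) * u ^ (k - 1) * (T - u) ≤ T ^ k - u ^ k := by
  obtain ⟨n, rfl⟩ := Nat.exists_eq_add_of_le hk
  have := aux_pow_sub_pow' u T hu huT n
  have h : (1 + n : ℕ) - 1 = n := by omega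
  rw [h]
  push_cast
  have e : (1 : ℕ) + n = n + 1 := by omega
  rw [e]
  linarith [this]

theorem aux_geom (T : ℝ) (h0 : 0 ≤ T) (h1 : T ≤ 1) (k m : ℕ) :
    ((k : ℝ) + m) * T ^ m * ∑ j ∈ Finset.range k, T ^ j ≤
      (k : ℝ) * ∑ j ∈ Finset.range (k + m), T ^ j := by
  have hsplit : ∑ j ∈ Finset.range (k + m), T ^ j
      = (∑ j ∈ Finset.range m, T ^ j) + ∑ j ∈ Finset.range k, T ^ (m + j) := by
    rw [add_comm k m, Finset.sum_range_add]
  have hA : T ^ m * ∑ j ∈ Finset.range k, T ^ j = ∑ j ∈ Finset.range k, T ^ (m + j) := by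
    rw [Finset.mul_sum]
    apply Finset.sum_congr rfl
    intro j _
    rw [pow_add]
  have hB : ∑ j ∈ Finset.range k, T ^ (m + j) ≤ (k : ℝ) * T ^ m := by
    calc ∑ j ∈ Finset.range k, T ^ (m + j) ≤ ∑ j ∈ Finset.range k, T ^ m := by
          apply Finset.sum_le_sum; intro j _
          exact pow_le_pow_of_le_one h0 h1 (Nat.le_add_right m j)
      _ = (k : ℝ) * T ^ m := by simp [mul_comm]
  have hC : (m : ℝ) * T ^ m ≤ ∑ j ∈ Finset.range m, T ^ j := by
    calc (m : ℝ) * T ^ m = ∑ _j ∈ Finset.range m, T ^ m := by simp [mul_comm]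
      _ ≤ ∑ j ∈ Finset.range m, T ^ j := by
          apply Finset.sum_le_sum; intro j hj
          exact pow_le_pow_of_le_one h0 h1 (le_of_lt (Finset.mem_range.mp hj))
  have hk0 : (0:ℝ) ≤ (k:ℝ) := Nat.cast_nonneg k
  have hm0 : (0:ℝ) ≤ (m:ℝ) := Nat.cast_nonneg m
  calc ((k : ℝ) + m) * T ^ m * ∑ j ∈ Finset.range k, T ^ j
      = (k : ℝ) * (∑ j ∈ Finset.range k, T ^ (m + j)) + (m : ℝ) * (T ^ m * ∑ j ∈ Finset.range k, T ^ j) := by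
        rw [← hA]; ring
    _ ≤ (k : ℝ) * (∑ j ∈ Finset.range k, T ^ (m + j)) + (m : ℝ) * ((k:ℝ) * T ^ m) := by
        have := mul_le_mul_of_nonneg_left (hA ▸ hB) hm0
        linarith
    _ = (k : ℝ) * (∑ j ∈ Finset.range k, T ^ (m + j)) + (k : ℝ) * ((m:ℝ) * T ^ m) := by ring
    _ ≤ (k : ℝ) * (∑ j ∈ Finset.range k, T ^ (m + j)) + (k : ℝ) * ∑ j ∈ Finset.range m, T ^ j := by
        have := mul_le_mul_of_nonneg_left hC hk0
        linarith
    _ = (k : ℝ) * ∑ j ∈ Finset.range (k + m), T ^ j := by rw [hsplit]; ring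

theorem aux_one_sub_pow (T : ℝ) (n : ℕ) :
    1 - T ^ n = (1 - T) * ∑ j ∈ Finset.range n, T ^ j := by
  have := geom_sum_mul T n
  nlinarith [this]

theorem aux_B (T : ℝ) (h0 : 0 ≤ T) (h1 : T ≤ 1) (k k₀ : ℕ) (hk1 : 1 ≤ k) (hkk : k ≤ k₀) :
    (k₀ : ℝ) * T ^ (k₀ - 1) * (1 - T ^ k) ≤ (k : ℝ) * T ^ (k - 1) * (1 - T ^ k₀) := by
  obtain ⟨m, rfl⟩ := Nat.exists_eq_add_of_le hkk
  have hpow : T ^ (k + m - 1) = T ^ (k - 1) * T ^ m := by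
    rw [← pow_add]
    congr 1
    omega
  rw [aux_one_sub_pow T k, aux_one_sub_pow T (k + m), hpow]
  have hgeo := aux_geom T h0 h1 k m
  have hfac : (0:ℝ) ≤ T ^ (k - 1) * (1 - T) := mul_nonneg (pow_nonneg h0 _) (by linarith)
  have := mul_le_mul_of_nonneg_left hgeo hfac
  push_cast at this ⊢
  nlinarith [this]

theorem aux_F6 (u T : ℝ) (hu : 0 ≤ u) (huT : u ≤ T) (k k₀ : ℕ) (hk1 : 1 ≤ k) (hkk : k ≤ k₀) :
    u ^ (k₀ - 1) * T ^ (k - 1) ≤ T ^ (k₀ - 1) * u ^ (k - 1) := by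
  have hT : 0 ≤ T := hu.trans huT
  have e1 : u ^ (k₀ - 1) = u ^ (k - 1) * u ^ (k₀ - k) := by
    rw [← pow_add]; congr 1; omega
  have e2 : T ^ (k₀ - 1) = T ^ (k - 1) * T ^ (k₀ - k) := by
    rw [← pow_add]; congr 1; omega
  rw [e1, e2]
  have hm : u ^ (k₀ - k) ≤ T ^ (k₀ - k) := pow_le_pow_left₀ hu huT _
  have : (0:ℝ) ≤ u ^ (k - 1) * T ^ (k - 1) := mul_nonneg (pow_nonneg hu _) (pow_nonneg hT _)
  nlinarith [mul_le_mul_of_nonneg_left hm this]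

/-- Property (T2'): for each `δ ∈ (0,1)`, the function
`g_δ(ε) = ((1 − (1−δ)^{k₀})/(k₀·δ)) · ((1+ε)/(δ+ε))^{k₀−1} · ε` is nonnegative with
`g_δ(ε) → 0` as `ε → 0+`, and for every `ε > 0` and every `x` with `x ≥ δ` and
`(1 + g_δ(ε))·x ≤ 1`: if `Q((1 + g_δ(ε))·x) ≤ (1−δ)/(1+ε)` then
`Q((1 + g_δ(ε))·x) ≥ (1+ε)·Q(x)`, where `Q(x) = ∑_{k=1}^{k₀} p_k·(1 − (1−x)^k)`. -/
theorem stmt_8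
    (k₀ : ℕ) (hk₀ : 1 < k₀)
    (m₀ : ℝ) (hm₀ : 1 < m₀)
    (p : ℕ → ℝ) (hp : ∀ k ∈ Finset.Icc 1 k₀, 0 ≤ p k)
    (hpsum : ∑ k ∈ Finset.Icc 1 k₀, p k = 1)
    (hpmean : m₀ < ∑ k ∈ Finset.Icc 1 k₀, (k : ℝ) * p k)
    (Q : ℝ → ℝ) (hQ : ∀ x, Q x = ∑ k ∈ Finset.Icc 1 k₀, p k * (1 - (1 - x) ^ k))
    (δ : ℝ) (hδ : δ ∈ Ioo (0 : ℝ) 1)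
    (gδ : ℝ → ℝ)
    (hgδ : ∀ ε : ℝ, gδ ε =
      ((1 - (1 - δ) ^ k₀) / (k₀ * δ)) * ((1 + ε) / (δ + ε)) ^ (k₀ - 1) * ε) :
    (∀ ε : ℝ, 0 < ε → 0 ≤ gδ ε) ∧
    Tendsto gδ (nhdsWithin 0 (Ioi 0)) (nhds 0) ∧
    (∀ ε : ℝ, 0 < ε → ∀ x : ℝ, δ ≤ x → (1 + gδ ε) * x ≤ 1 →
      Q ((1 + gδ ε) * x) ≤ (1 - δ) / (1 + ε) →
      (1 + ε) * Q x ≤ Q ((1 + gδ ε) * x)) := by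
  obtain ⟨hδ0, hδ1⟩ := hδ
  have hk₀0 : (0:ℝ) < (k₀ : ℝ) := by positivity
  have hq01 : (1 - δ) ^ k₀ ≤ 1 := pow_le_one₀ (by linarith) (by linarith)
  have hC0 : 0 ≤ (1 - (1 - δ) ^ k₀) / (k₀ * δ) :=
    div_nonneg (by linarith) (by positivity)
  -- Part 1
  have part1 : ∀ ε : ℝ, 0 < ε → 0 ≤ gδ ε := by
    intro ε hε
    rw [hgδ]
    apply mul_nonneg (mul_nonneg hC0 _) hε.le
    apply pow_nonneg
    apply div_nonneg <;> linarith
  refine ⟨part1, ?_, ?_⟩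
  · -- Part 2: tendsto
    have hfun : gδ = fun ε : ℝ =>
        ((1 - (1 - δ) ^ k₀) / (k₀ * δ)) * ((1 + ε) / (δ + ε)) ^ (k₀ - 1) * ε :=
      funext hgδ
    have hcont : ContinuousAt (fun ε : ℝ =>
        ((1 - (1 - δ) ^ k₀) / (k₀ * δ)) * ((1 + ε) / (δ + ε)) ^ (k₀ - 1) * ε) 0 := by
      apply ContinuousAt.mul _ continuousAt_id
      apply ContinuousAt.mul continuousAt_const
      apply ContinuousAt.pow
      apply ContinuousAt.div (by fun_prop) (by fun_prop)
      simpa using hδ0.ne'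
    have h0 : ((1 - (1 - δ) ^ k₀) / (k₀ * δ)) * ((1 + (0:ℝ)) / (δ + 0)) ^ (k₀ - 1) * 0 = 0 := by
      ring
    rw [hfun]
    refine Tendsto.mono_left ?_ nhdsWithin_le_nhds
    simpa [h0] using hcont.tendsto
  · -- Part 3
    intro ε hε x hδx hy1 hQy
    set g := gδ ε with hgdef
    have hg0 : 0 ≤ g := part1 ε hε
    set y := (1 + g) * x with hydef
    have hx0 : 0 < x := lt_of_lt_of_le hδ0 hδx
    have hxy : x ≤ y := by nlinarith
    have hx1 : x ≤ 1 := hxy.trans hy1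
    set T := 1 - x with hTdef
    set u := 1 - y with hudef
    have hu0 : 0 ≤ u := by simp [hudef]; linarith
    have huT : u ≤ T := by simp [hudef, hTdef]; linarith
    have hT1 : T ≤ 1 - δ := by simp [hTdef]; linarith
    have hT01 : T ≤ 1 := by linarith
    have hT0 : 0 ≤ T := hu0.trans huT
    -- rewrite Q
    have hQx : Q x = ∑ k ∈ Finset.Icc 1 k₀, p k * (1 - T ^ k) := hQ x
    have hQyv : Q y = ∑ k ∈ Finset.Icc 1 k₀, p k * (1 - u ^ k) := hQ y
    set Su := ∑ k ∈ Finset.Icc 1 k₀, p k * u ^ k with hSudef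
    set ST := ∑ k ∈ Finset.Icc 1 k₀, p k * T ^ k with hSTdef
    have hQx' : Q x = 1 - ST := by
      rw [hQx, hSTdef]
      simp_rw [mul_sub, mul_one]
      rw [Finset.sum_sub_distrib, hpsum]
    have hQy' : Q y = 1 - Su := by
      rw [hQyv, hSudef]
      simp_rw [mul_sub, mul_one]
      rw [Finset.sum_sub_distrib, hpsum]
    have hε1 : (0:ℝ) < 1 + ε := by linarith
    set v := (δ + ε) / (1 + ε) with hvdef
    have hv0 : 0 < v := by positivity
    have hSu_ge : v ≤ Su := by
      rw [hQy'] at hQy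
      have h2 : (1 - δ) / (1 + ε) * (1 + ε) = 1 - δ := div_mul_cancel₀ _ hε1.ne'
      have h3 := mul_le_mul_of_nonneg_right hQy hε1.le
      rw [hvdef, div_le_iff₀ hε1]
      nlinarith [h3, h2]
    have hu1 : u ≤ 1 := by linarith
    have hSu_le : Su ≤ u := by
      rw [hSudef]
      calc ∑ k ∈ Finset.Icc 1 k₀, p k * u ^ k ≤ ∑ k ∈ Finset.Icc 1 k₀, p k * u := by
            apply Finset.sum_le_sum
            intro k hk
            obtain ⟨hk1, hk2⟩ := Finset.mem_Icc.mp hk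
            exact mul_le_mul_of_nonneg_left
              (pow_le_of_le_one hu0 hu1 (by omega)) (hp k hk)
        _ = u := by rw [← Finset.sum_mul, hpsum, one_mul]
    have hvu : v ≤ u := hSu_ge.trans hSu_le
    have hu_pos : 0 < u := lt_of_lt_of_le hv0 hvu
    have hT_pos : 0 < T := lt_of_lt_of_le hu_pos huT
    -- derivative sums
    set Du := ∑ k ∈ Finset.Icc 1 k₀, (k : ℝ) * p k * u ^ (k - 1) with hDudef
    set DT := ∑ k ∈ Finset.Icc 1 k₀, (k : ℝ) * p k * T ^ (k - 1) with hDTdef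
    have hDu0 : 0 ≤ Du := by
      apply Finset.sum_nonneg
      intro k hk
      exact mul_nonneg (mul_nonneg (Nat.cast_nonneg k) (hp k hk)) (pow_nonneg hu0 _)
    have hDT0 : 0 ≤ DT := by
      apply Finset.sum_nonneg
      intro k hk
      exact mul_nonneg (mul_nonneg (Nat.cast_nonneg k) (hp k hk)) (pow_nonneg hT0 _)
    -- F4 : (T - u) * Du ≤ ST - Su
    have hF4 : (T - u) * Du ≤ ST - Su := by
      have : (T - u) * Du = ∑ k ∈ Finset.Icc 1 k₀, p k * ((k : ℝ) * u ^ (k - 1) * (T - u)) := by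
        rw [hDudef, Finset.mul_sum]
        apply Finset.sum_congr rfl
        intro k _
        ring
      rw [this, hSTdef, hSudef, ← Finset.sum_sub_distrib]
      apply Finset.sum_le_sum
      intro k hk
      obtain ⟨hk1, hk2⟩ := Finset.mem_Icc.mp hk
      have := aux_pow_sub_pow u T hu0 huT k hk1
      have hpk := hp k hk
      calc p k * ((k : ℝ) * u ^ (k - 1) * (T - u)) ≤ p k * (T ^ k - u ^ k) :=
            mul_le_mul_of_nonneg_left this hpk
        _ = p k * T ^ k - p k * u ^ k := by ring
    -- F5 : k₀ * T^(k₀-1) * Q x ≤ (1 - T^k₀) * DT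
    have hF5 : (k₀ : ℝ) * T ^ (k₀ - 1) * Q x ≤ (1 - T ^ k₀) * DT := by
      rw [hQx]
      rw [Finset.mul_sum]
      have : (1 - T ^ k₀) * DT
          = ∑ k ∈ Finset.Icc 1 k₀, p k * ((k : ℝ) * T ^ (k - 1) * (1 - T ^ k₀)) := by
        rw [hDTdef, Finset.mul_sum]
        apply Finset.sum_congr rfl
        intro k _
        ring
      rw [this]
      apply Finset.sum_le_sum
      intro k hk
      obtain ⟨hk1, hk2⟩ := Finset.mem_Icc.mp hk
      have := aux_B T hT0 hT01 k k₀ hk1 hk2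
      have hpk := hp k hk
      calc (k₀ : ℝ) * T ^ (k₀ - 1) * (p k * (1 - T ^ k))
          = p k * ((k₀ : ℝ) * T ^ (k₀ - 1) * (1 - T ^ k)) := by ring
        _ ≤ p k * ((k : ℝ) * T ^ (k - 1) * (1 - T ^ k₀)) :=
            mul_le_mul_of_nonneg_left this hpk
    -- F6 : u^(k₀-1) * DT ≤ T^(k₀-1) * Du
    have hF6 : u ^ (k₀ - 1) * DT ≤ T ^ (k₀ - 1) * Du := by
      rw [hDTdef, hDudef, Finset.mul_sum, Finset.mul_sum]
      apply Finset.sum_le_sum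
      intro k hk
      obtain ⟨hk1, hk2⟩ := Finset.mem_Icc.mp hk
      have := aux_F6 u T hu0 huT k k₀ hk1 hk2
      have hpk := hp k hk
      have hkpk : (0:ℝ) ≤ (k : ℝ) * p k := mul_nonneg (Nat.cast_nonneg k) hpk
      calc u ^ (k₀ - 1) * ((k : ℝ) * p k * T ^ (k - 1))
          = ((k : ℝ) * p k) * (u ^ (k₀ - 1) * T ^ (k - 1)) := by ring
        _ ≤ ((k : ℝ) * p k) * (T ^ (k₀ - 1) * u ^ (k - 1)) :=
            mul_le_mul_of_nonneg_left this hkpk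
        _ = T ^ (k₀ - 1) * ((k : ℝ) * p k * u ^ (k - 1)) := by ring
    -- F7 : δ * (1 - T^k₀) ≤ x * (1 - (1-δ)^k₀)
    have hF7 : δ * (1 - T ^ k₀) ≤ x * (1 - (1 - δ) ^ k₀) := by
      rw [aux_one_sub_pow T k₀, aux_one_sub_pow (1 - δ) k₀]
      have hgsum : ∑ j ∈ Finset.range k₀, T ^ j ≤ ∑ j ∈ Finset.range k₀, (1 - δ) ^ j := by
        apply Finset.sum_le_sum
        intro j _
        exact pow_le_pow_left₀ hT0 hT1 j
      have h1T : 1 - T = x := by rw [hTdef]; ring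
      rw [h1T]
      have h1 : δ * (x * ∑ j ∈ Finset.range k₀, T ^ j)
          ≤ δ * (x * ∑ j ∈ Finset.range k₀, (1 - δ) ^ j) := by
        apply mul_le_mul_of_nonneg_left _ hδ0.le
        exact mul_le_mul_of_nonneg_left hgsum hx0.le
      calc δ * (x * ∑ j ∈ Finset.range k₀, T ^ j)
          ≤ δ * (x * ∑ j ∈ Finset.range k₀, (1 - δ) ^ j) := h1
        _ = x * ((1 - (1 - δ)) * ∑ j ∈ Finset.range k₀, (1 - δ) ^ j) := by ring
    -- F8 : g * v^(k₀-1) * (k₀ * δ) = (1 - (1-δ)^k₀) * ε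
    have hδε : (0:ℝ) < δ + ε := by linarith
    have hF8 : g * v ^ (k₀ - 1) * ((k₀ : ℝ) * δ) = (1 - (1 - δ) ^ k₀) * ε := by
      have hbase : (1 + ε) / (δ + ε) * ((δ + ε) / (1 + ε)) = 1 := by
        field_simp
      have hA : ((1 + ε) / (δ + ε)) ^ (k₀ - 1) * v ^ (k₀ - 1) = 1 := by
        rw [hvdef, ← mul_pow, hbase, one_pow]
      have hkδ : ((k₀ : ℝ) * δ) ≠ 0 := by positivity
      calc g * v ^ (k₀ - 1) * ((k₀ : ℝ) * δ)
          = (1 - (1 - δ) ^ k₀) / ((k₀ : ℝ) * δ) * ((k₀ : ℝ) * δ)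
              * (((1 + ε) / (δ + ε)) ^ (k₀ - 1) * v ^ (k₀ - 1)) * ε := by
            rw [hgdef, hgδ]; ring
        _ = (1 - (1 - δ) ^ k₀) / ((k₀ : ℝ) * δ) * ((k₀ : ℝ) * δ) * ε := by rw [hA]; ring
        _ = (1 - (1 - δ) ^ k₀) * ε := by rw [div_mul_cancel₀ _ hkδ]
    -- Key inequality : ε * Q x ≤ g * x * Du
    have hP : (0:ℝ) < (k₀ : ℝ) * δ * T ^ (k₀ - 1) := by positivity
    have hkey : ε * Q x ≤ g * x * Du := by
      refine le_of_mul_le_mul_right ?_ hP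
      have step1 : ε * Q x * ((k₀ : ℝ) * δ * T ^ (k₀ - 1))
          = (ε * δ) * ((k₀ : ℝ) * T ^ (k₀ - 1) * Q x) := by ring
      have step2 : (ε * δ) * ((k₀ : ℝ) * T ^ (k₀ - 1) * Q x)
          ≤ (ε * δ) * ((1 - T ^ k₀) * DT) := by
        apply mul_le_mul_of_nonneg_left hF5
        positivity
      have step3 : (ε * δ) * ((1 - T ^ k₀) * DT) ≤ (ε * x * (1 - (1 - δ) ^ k₀)) * DT := by
        have := mul_le_mul_of_nonneg_right (mul_le_mul_of_nonneg_left hF7 hε.le) hDT0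
        calc (ε * δ) * ((1 - T ^ k₀) * DT) = (ε * (δ * (1 - T ^ k₀))) * DT := by ring
          _ ≤ (ε * (x * (1 - (1 - δ) ^ k₀))) * DT := this
          _ = (ε * x * (1 - (1 - δ) ^ k₀)) * DT := by ring
      have step4 : (ε * x * (1 - (1 - δ) ^ k₀)) * DT
          = g * x * (v ^ (k₀ - 1) * ((k₀ : ℝ) * δ)) * DT := by
        rw [show g * x * (v ^ (k₀ - 1) * ((k₀ : ℝ) * δ)) * DT
            = x * (g * v ^ (k₀ - 1) * ((k₀ : ℝ) * δ)) * DT by ring, hF8]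
        ring
      have step5 : g * x * (v ^ (k₀ - 1) * ((k₀ : ℝ) * δ)) * DT
          ≤ g * x * (u ^ (k₀ - 1) * ((k₀ : ℝ) * δ)) * DT := by
        have hvle : v ^ (k₀ - 1) ≤ u ^ (k₀ - 1) := pow_le_pow_left₀ hv0.le hvu _
        have h1 : (0:ℝ) ≤ g * x := mul_nonneg hg0 hx0.le
        have h2 : (0:ℝ) ≤ (k₀ : ℝ) * δ := by positivity
        calc g * x * (v ^ (k₀ - 1) * ((k₀ : ℝ) * δ)) * DT
            = (g * x * ((k₀ : ℝ) * δ) * DT) * v ^ (k₀ - 1) := by ring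
          _ ≤ (g * x * ((k₀ : ℝ) * δ) * DT) * u ^ (k₀ - 1) := by
              apply mul_le_mul_of_nonneg_left hvle
              positivity
          _ = g * x * (u ^ (k₀ - 1) * ((k₀ : ℝ) * δ)) * DT := by ring
      have step6 : g * x * (u ^ (k₀ - 1) * ((k₀ : ℝ) * δ)) * DT
          ≤ g * x * Du * ((k₀ : ℝ) * δ * T ^ (k₀ - 1)) := by
        have h1 : (0:ℝ) ≤ g * x * ((k₀ : ℝ) * δ) := by positivity
        calc g * x * (u ^ (k₀ - 1) * ((k₀ : ℝ) * δ)) * DT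
            = (g * x * ((k₀ : ℝ) * δ)) * (u ^ (k₀ - 1) * DT) := by ring
          _ ≤ (g * x * ((k₀ : ℝ) * δ)) * (T ^ (k₀ - 1) * Du) :=
              mul_le_mul_of_nonneg_left hF6 h1
          _ = g * x * Du * ((k₀ : ℝ) * δ * T ^ (k₀ - 1)) := by ring
      calc ε * Q x * ((k₀ : ℝ) * δ * T ^ (k₀ - 1))
          = (ε * δ) * ((k₀ : ℝ) * T ^ (k₀ - 1) * Q x) := step1
        _ ≤ (ε * δ) * ((1 - T ^ k₀) * DT) := step2
        _ ≤ (ε * x * (1 - (1 - δ) ^ k₀)) * DT := step3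
        _ = g * x * (v ^ (k₀ - 1) * ((k₀ : ℝ) * δ)) * DT := step4
        _ ≤ g * x * (u ^ (k₀ - 1) * ((k₀ : ℝ) * δ)) * DT := step5
        _ ≤ g * x * Du * ((k₀ : ℝ) * δ * T ^ (k₀ - 1)) := step6
    -- Conclusion
    have hTu_eq : T - u = g * x := by
      rw [hTdef, hudef, hydef]; ring
    rw [hQx', hQy']
    rw [hQx'] at hkey
    rw [hTu_eq] at hF4
    linarith [hF4, hkey]
end

section
/- In the truncation setup, assume additionally the truncated inequality ∑_{k=1}^{k₀} p_k·∫_{(−∞,r]} Q_{1,k}(u(x₂−y)) dg_k(y) ≤ (1+ε')·∑_{k=1}^{k₀} p_k·∫_{(−∞,r]} Q_{2,k}(u(x₁−y)) dg_k(y). Then there exist an integer k with 1 ≤ k ≤ k₀ and a real r' ≤ r, with r' = r whenever r' > M, such that ∫_{(−∞,r']} u(x₂−y) dg_k(y) ≤ (1+ε'')·∫_{(−∞,r']} u(x₁−y) dg_k(y). -/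
open MeasureTheory Set Filter Topology

/-- The set whose infimum defines the first non-flatness place `q` to the left of `x₁`:
`{y ≥ M/2 : u(x₂−y) > (4k₀)²·u(x₁−y)}`. -/
def flatSet (k₀ : ℕ) (u : ℝ → ℝ) (x₁ x₂ M : ℝ) : Set ℝ :=
  {y : ℝ | M / 2 ≤ y ∧ (4 * (k₀ : ℝ)) ^ 2 * u (x₁ - y) < u (x₂ - y)}

/-!
Write `w y = u (x₂ - y)`, `τ = δ / (4 c₁)` and `β = 2 f₀ / (1 - ε₀)`. The sandwich bound at `x₂`
and `g_k(0, ∞) ≥ 1 - ε₀` give `u x₂ ≤ β`, and condition (ii) with the smallness of `f₀` gives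
`512 k₀⁵ β ≤ τ²`.

By `k t - c₁ t² ≤ 1 - (1 - t)^k`, the truncated inequality at any cutoff `r'` linearizes with an
error `c₁ ∫ w²`, which costs only a factor `1 + δ/2` once `∫ w² ≤ 2τ ∫ w`; a weighted pigeonhole
over `k` then yields the claim at `r'`. Let `ρ ≤ r` be the last point with `w ≤ τ` (right continuity
of `u`), so `w ≤ τ` on `(-∞, ρ]` and `w > τ` on `(ρ, r]`.

If `r ≤ M`, take `r' = ρ`: on `(ρ, r]` the `x₁`-side is at most `2 k₀ β ≤ τ < w`, so removing this
strip from both sides preserves the truncated inequality. If `r > M`, take `r' = r`: now `r ≤ q`, so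
`w y ≤ K w (y - M)` on `[M/2, r]` with `K = (4k₀)²`, and `K⁴ ≤ e^(aM)` by (i). Since `β` is tiny,
`K^(j+1) β ≤ τ` forces `ρ ≥ M/2 + jM`, and iterating the flatness `j` times from points just above
`ρ` gives `w ≥ τ K^(-j)` on `(ρ - jM, r]`. That interval carries at least half of the `g_k`-mass
beyond `ρ - jM`, while the tail decay over the distance `jM` shrinks `g_k(ρ, ∞)` by
`e^(-ajM) ≤ K^(-4j)`. For the least `j` with `τ² K^(3j) > 4` this gives `g_k(ρ, ∞) ≤ τ/2 ∫ w`,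
which bounds the contribution of `(ρ, r]` to `∫ w²`.
-/

lemma le_one_sub_one_sub_pow {k : ℕ} {t : ℝ} (hk : 1 ≤ k) (h0 : 0 ≤ t) (h1 : t ≤ 1) :
    t ≤ 1 - (1 - t) ^ k := by
  have := pow_le_of_le_one (sub_nonneg.2 h1) (by linarith) (by omega : k ≠ 0)
  linarith

lemma one_sub_one_sub_pow_mem_Icc (k : ℕ) {t : ℝ} (h0 : 0 ≤ t) (h1 : t ≤ 1) :
    1 - (1 - t) ^ k ∈ Icc (0 : ℝ) 1 :=
  ⟨sub_nonneg.2 (pow_le_one₀ (by linarith) (by linarith)),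
    sub_le_self _ (pow_nonneg (by linarith) _)⟩

lemma Finset.exists_nonpos_of_sum_mul_nonpos {ι : Type*} {s : Finset ι} {p t : ι → ℝ}
    (hp : ∀ i ∈ s, 0 ≤ p i) (hs : 0 < ∑ i ∈ s, p i) (h : ∑ i ∈ s, p i * t i ≤ 0) :
    ∃ i ∈ s, t i ≤ 0 := by
  by_contra! ht
  obtain ⟨i, hi, hpi⟩ : ∃ i ∈ s, 0 < p i := by
    by_contra! h'
    linarith [Finset.sum_nonpos h']
  have := Finset.sum_pos' (fun i hi => mul_nonneg (hp i hi) (ht i hi).le)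
    ⟨i, hi, mul_pos hpi (ht i hi)⟩
  linarith

lemma exists_le_of_linearization {s : Finset ℕ} {p n A B Q E : ℕ → ℝ} {ε δ : ℝ}
    (hp : ∀ k ∈ s, 0 ≤ p k) (hps : 0 < ∑ k ∈ s, p k) (hn : ∀ k ∈ s, 0 < n k)
    (hB : ∀ k ∈ s, 0 ≤ B k) (hδ : 0 ≤ δ) (hε : ε ≤ 1)
    (hAQ : ∀ k ∈ s, A k ≤ Q k) (hlin : ∀ k ∈ s, n k * A k - E k ≤ Q k)
    (hE : ∀ k ∈ s, E k ≤ δ / 2 * A k)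
    (hsum : ∑ k ∈ s, p k * Q k ≤ (1 + ε) * ∑ k ∈ s, p k * (n k * B k)) :
    ∃ k ∈ s, A k ≤ (1 + ε + δ) * B k := by
  have hS : 0 ≤ ∑ k ∈ s, p k * (n k * B k) := Finset.sum_nonneg fun k hk =>
    mul_nonneg (hp k hk) (mul_nonneg (hn k hk).le (hB k hk))
  have hnA : ∑ k ∈ s, p k * (n k * A k) ≤ (1 + δ / 2) * ∑ k ∈ s, p k * Q k := by
    rw [Finset.mul_sum]
    refine Finset.sum_le_sum fun k hk => ?_
    have hAQ' := mul_le_mul_of_nonneg_left (hAQ k hk) (by linarith : 0 ≤ δ / 2)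
    have hnAQ : n k * A k ≤ (1 + δ / 2) * Q k := by linarith [hlin k hk, hE k hk]
    nlinarith [mul_le_mul_of_nonneg_left hnAQ (hp k hk)]
  have hsum' : ∑ k ∈ s, p k * (n k * A k - (1 + ε + δ) * (n k * B k)) ≤ 0 := by
    simp only [mul_sub, Finset.sum_sub_distrib, mul_left_comm _ (1 + ε + δ), ← Finset.mul_sum]
    nlinarith [mul_le_mul_of_nonneg_left hsum (by linarith : 0 ≤ 1 + δ / 2),
      mul_nonneg (mul_nonneg hδ (sub_nonneg.2 hε)) hS]
  obtain ⟨k, hk, hle⟩ := Finset.exists_nonpos_of_sum_mul_nonpos hp hps hsum'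
  refine ⟨k, hk, le_of_mul_le_mul_left ?_ (hn k hk)⟩
  linarith

lemma exists_integral_le_of_sum_integral_le {k₀ : ℕ} {c₁ δ ε τ : ℝ} {p : ℕ → ℝ}
    {ν : ℕ → Measure ℝ} [∀ k, IsFiniteMeasure (ν k)] {w w₁ : ℝ → ℝ}
    (hw : Measurable w) (hw01 : ∀ y, w y ∈ Icc (0 : ℝ) 1) (hw₁0 : ∀ y, 0 ≤ w₁ y)
    (hc₁ : ∀ k : ℕ, 1 ≤ k → k ≤ k₀ → ∀ t : ℝ, 0 ≤ t → t ≤ 1 →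
      (k : ℝ) * t - c₁ * t ^ 2 ≤ 1 - (1 - t) ^ k)
    (hp : ∀ k ∈ Finset.Icc 1 k₀, 0 ≤ p k) (hps : 0 < ∑ k ∈ Finset.Icc 1 k₀, p k)
    (hc₁0 : 0 ≤ c₁) (hδ : 0 ≤ δ) (hτ : 4 * c₁ * τ ≤ δ) (hε : ε ≤ 1)
    (hsq : ∀ k ∈ Finset.Icc 1 k₀, ∫ y, w y ^ 2 ∂ν k ≤ 2 * τ * ∫ y, w y ∂ν k)
    (h : ∑ k ∈ Finset.Icc 1 k₀, p k * ∫ y, (1 - (1 - w y) ^ k) ∂ν k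
      ≤ (1 + ε) * ∑ k ∈ Finset.Icc 1 k₀, p k * ∫ y, (k : ℝ) * w₁ y ∂ν k) :
    ∃ k, 1 ≤ k ∧ k ≤ k₀ ∧ ∫ y, w y ∂ν k ≤ (1 + ε + δ) * ∫ y, w₁ y ∂ν k := by
  have hint {f : ℝ → ℝ} (k : ℕ) (hf : Measurable f) (h : ∀ y, f y ∈ Icc (0 : ℝ) 1) :
      Integrable f (ν k) := Integrable.of_mem_Icc 0 1 hf.aemeasurable (ae_of_all _ h)
  have hwi (k : ℕ) : Integrable w (ν k) := hint k hw hw01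
  have hw2i (k : ℕ) : Integrable (fun y => w y ^ 2) (ν k) :=
    hint k (hw.pow_const 2) fun y => ⟨sq_nonneg _, pow_le_one₀ (hw01 y).1 (hw01 y).2⟩
  have hQi (k : ℕ) : Integrable (fun y => 1 - (1 - w y) ^ k) (ν k) :=
    hint k (by fun_prop) fun y => one_sub_one_sub_pow_mem_Icc k (hw01 y).1 (hw01 y).2
  have hAQ : ∀ k ∈ Finset.Icc 1 k₀, ∫ y, w y ∂ν k ≤ ∫ y, (1 - (1 - w y) ^ k) ∂ν k :=
    fun k hk => integral_mono (hwi k) (hQi k)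
      fun y => le_one_sub_one_sub_pow (Finset.mem_Icc.1 hk).1 (hw01 y).1 (hw01 y).2
  have hlin : ∀ k ∈ Finset.Icc 1 k₀,
      k * ∫ y, w y ∂ν k - c₁ * ∫ y, w y ^ 2 ∂ν k ≤ ∫ y, (1 - (1 - w y) ^ k) ∂ν k := by
    intro k hk
    rw [← integral_const_mul, ← integral_const_mul,
      ← integral_sub ((hwi k).const_mul _) ((hw2i k).const_mul _)]
    exact integral_mono (((hwi k).const_mul _).sub ((hw2i k).const_mul _)) (hQi k)
      fun y => hc₁ k (Finset.mem_Icc.1 hk).1 (Finset.mem_Icc.1 hk).2 _ (hw01 y).1 (hw01 y).2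
  have hE : ∀ k ∈ Finset.Icc 1 k₀, c₁ * ∫ y, w y ^ 2 ∂ν k ≤ δ / 2 * ∫ y, w y ∂ν k :=
    fun k hk => by
      nlinarith [mul_le_mul_of_nonneg_left (hsq k hk) hc₁0,
        integral_nonneg (f := w) (μ := ν k) fun y => (hw01 y).1]
  obtain ⟨k, hk, hle⟩ := exists_le_of_linearization (n := fun k => (k : ℝ))
    hp hps (fun k hk => by have := (Finset.mem_Icc.1 hk).1; positivity)
    (fun k _ => integral_nonneg hw₁0) hδ hε hAQ hlin hE
    (by simpa only [integral_const_mul] using h)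
  exact ⟨k, (Finset.mem_Icc.1 hk).1, (Finset.mem_Icc.1 hk).2, hle⟩

lemma setIntegral_sq_le_mul {μ : Measure ℝ} [IsFiniteMeasure μ] {w : ℝ → ℝ} {s : Set ℝ} {τ : ℝ}
    (hs : MeasurableSet s) (hwm : Measurable w) (hw01 : ∀ y, w y ∈ Icc (0 : ℝ) 1)
    (h : ∀ y ∈ s, w y ≤ τ) :
    ∫ y in s, w y ^ 2 ∂μ ≤ τ * ∫ y in s, w y ∂μ := by
  have hint := Integrable.of_mem_Icc (μ := μ) 0 1 hwm.aemeasurable (ae_of_all _ hw01)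
  have hint2 := Integrable.of_mem_Icc (μ := μ) 0 1 (hwm.pow_const 2).aemeasurable
    (ae_of_all _ fun y => ⟨sq_nonneg (w y), pow_le_one₀ (hw01 y).1 (hw01 y).2⟩)
  rw [← integral_const_mul]
  refine setIntegral_mono_on hint2.integrableOn (hint.const_mul τ).integrableOn hs fun y hy => ?_
  rw [sq]
  exact mul_le_mul_of_nonneg_right (h y hy) (hw01 y).1

lemma sum_setIntegral_Iic_le_of_le_on_Ioc {s : Finset ℕ} {p : ℕ → ℝ} {μ : ℕ → Measure ℝ}
    {F G : ℕ → ℝ → ℝ} {c ρ r : ℝ} (hp : ∀ k ∈ s, 0 ≤ p k) (hρr : ρ ≤ r)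
    (hF : ∀ k, Integrable (F k) (μ k)) (hG : ∀ k, Integrable (G k) (μ k))
    (hstrip : ∀ k ∈ s, ∀ y ∈ Ioc ρ r, c * G k y ≤ F k y)
    (h : ∑ k ∈ s, p k * ∫ y in Iic r, F k y ∂μ k
      ≤ c * ∑ k ∈ s, p k * ∫ y in Iic r, G k y ∂μ k) :
    ∑ k ∈ s, p k * ∫ y in Iic ρ, F k y ∂μ k ≤ c * ∑ k ∈ s, p k * ∫ y in Iic ρ, G k y ∂μ k := by
  have hsplit : ∀ k (f : ℝ → ℝ), Integrable f (μ k) →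
      ∫ y in Iic r, f y ∂μ k = ∫ y in Iic ρ, f y ∂μ k + ∫ y in Ioc ρ r, f y ∂μ k :=
    fun k f hf => by rw [← setIntegral_union (Iic_disjoint_Ioc le_rfl) measurableSet_Ioc
      hf.integrableOn hf.integrableOn, Iic_union_Ioc_eq_Iic hρr]
  have hIoc : c * ∑ k ∈ s, p k * ∫ y in Ioc ρ r, G k y ∂μ k
      ≤ ∑ k ∈ s, p k * ∫ y in Ioc ρ r, F k y ∂μ k := by
    rw [Finset.mul_sum]
    refine Finset.sum_le_sum fun k hk => ?_
    rw [mul_left_comm, ← integral_const_mul]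
    exact mul_le_mul_of_nonneg_left (setIntegral_mono_on ((hG k).const_mul c).integrableOn
      (hF k).integrableOn measurableSet_Ioc (hstrip k hk)) (hp k hk)
  simp only [hsplit _ _ (hF _), hsplit _ _ (hG _), mul_add, Finset.sum_add_distrib] at h
  linarith

lemma mul_le_of_rpow_conditions {k c ε₀ ε₁ η κ l f : ℝ} (hk : 1 ≤ k) (hc : 1 ≤ c)
    (hε₀ : 0 ≤ ε₀) (hε₀1 : ε₀ < 1) (hκ : 0 < κ) (hκ1 : κ ≤ 1) (hη : 0 < η) (hηε₁ : η ≤ ε₁)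
    (hε₁ : ε₁ < 1)
    (hcond : 8 * (2 * k) ^ ((5 : ℝ) / 2) * ε₁ ^ (1 / (2 * l) - 3 / 2 : ℝ)
      / ((1 - ε₀) * κ ^ ((3 : ℝ) / 2)) < 1 / (2 * c))
    (hf : f < η ^ (1 / l : ℝ) * Real.exp (-Real.log 2)) :
    16384 * c ^ 2 * k ^ 5 * f ≤ (κ * η) ^ 3 * (1 - ε₀) ^ 2 := by
  have hε₁0 : 0 < ε₁ := hη.trans_le hηε₁
  rw [show 1 / (2 * l) - 3 / 2 = (1 / l - 3) / 2 by ring,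
    div_lt_div_iff₀ (by positivity) (by positivity)] at hcond
  have hP : 16 * c * ((2 * k) ^ ((5 : ℝ) / 2) * ε₁ ^ ((1 / l - 3) / 2))
      < (1 - ε₀) * κ ^ ((3 : ℝ) / 2) := by linarith
  have hL : 3 ≤ 1 / l := by
    by_contra! h
    have h1 : 1 < ε₁ ^ ((1 / l - 3) / 2) :=
      Real.one_lt_rpow_of_pos_of_lt_one_of_neg hε₁0 hε₁ (by linarith)
    have h2 : 1 ≤ (2 * k) ^ ((5 : ℝ) / 2) := Real.one_le_rpow (by linarith) (by norm_num)
    have h3 : κ ^ ((3 : ℝ) / 2) ≤ 1 := Real.rpow_le_one hκ.le hκ1 (by norm_num)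
    have h4 := mul_le_mul hc (one_lt_mul_of_le_of_lt h2 h1).le zero_le_one (by linarith)
    nlinarith [mul_le_mul_of_nonneg_left h3 (by linarith : 0 ≤ 1 - ε₀)]
  -- squaring removes the half-integer exponents
  have hsq : 8192 * c ^ 2 * k ^ 5 * ε₁ ^ (1 / l - 3) < κ ^ 3 * (1 - ε₀) ^ 2 := by
    have h := pow_lt_pow_left₀ hP (by positivity) two_ne_zero
    have hhalf : ∀ {x : ℝ} (t : ℝ), 0 ≤ x → (x ^ (t / 2)) ^ 2 = x ^ t := fun t hx => by
      rw [← Real.rpow_mul_natCast hx]; norm_num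
    simp only [mul_pow] at h
    rw [hhalf _ (by linarith), hhalf _ hε₁0.le, hhalf _ hκ.le, Real.rpow_ofNat,
      Real.rpow_ofNat] at h
    linarith
  have hη3 : η ^ (1 / l) ≤ η ^ 3 * ε₁ ^ (1 / l - 3) := by
    rw [show η ^ (1 / l) = η ^ (3 : ℝ) * η ^ (1 / l - 3) by
      rw [← Real.rpow_add hη]; ring_nf, Real.rpow_ofNat]
    exact mul_le_mul_of_nonneg_left (Real.rpow_le_rpow hη.le hηε₁ (by linarith)) (by positivity)
  rw [Real.exp_neg, Real.exp_log two_pos] at hf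
  have hck : 0 < 8192 * c ^ 2 * k ^ 5 := by positivity
  nlinarith [mul_le_mul_of_nonneg_left hsq.le (by positivity : 0 ≤ η ^ 3),
    mul_lt_mul_of_pos_left hf hck, mul_le_mul_of_nonneg_left hη3 hck.le]

lemma mul_le_sq_of_mul_le_cube {k c ε₀ δ f : ℝ} (hc : 1 ≤ c) (hε₀ : 0 ≤ ε₀) (hε₀1 : ε₀ < 1)
    (hδ : 0 < δ) (hδ1 : δ ≤ 1) (h : 16384 * c ^ 2 * k ^ 5 * f ≤ δ ^ 3 * (1 - ε₀) ^ 2) :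
    512 * k ^ 5 * (2 * f / (1 - ε₀)) ≤ (δ / (4 * c)) ^ 2 := by
  have hε₀' : 0 < 1 - ε₀ := by linarith
  have hc0 : 0 < c := by linarith
  calc 512 * k ^ 5 * (2 * f / (1 - ε₀))
        = 16384 * c ^ 2 * k ^ 5 * f / ((1 - ε₀) * (16 * c ^ 2)) := by field_simp; ring
    _ ≤ δ ^ 3 * (1 - ε₀) ^ 2 / ((1 - ε₀) * (16 * c ^ 2)) :=
        div_le_div_of_nonneg_right h (by positivity)
    _ = δ ^ 2 * (δ * (1 - ε₀)) / (16 * c ^ 2) := by field_simp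
    _ ≤ δ ^ 2 * 1 / (16 * c ^ 2) := by gcongr; nlinarith
    _ = (δ / (4 * c)) ^ 2 := by ring

lemma two_mul_mul_le_of_small {k β τ : ℝ} (hk : 1 ≤ k) (hβ : 0 ≤ β) (hτ : 0 ≤ τ) (hτ1 : τ ≤ 1)
    (h : 512 * k ^ 5 * β ≤ τ ^ 2) : 2 * k * β ≤ τ := by
  have hk5 : k ≤ k ^ 5 := le_self_pow₀ hk (by norm_num)
  nlinarith [mul_le_mul_of_nonneg_right hk5 hβ]

lemma mul_pow_mul_cube_le_of_small {k β τ : ℝ} (hk : 1 ≤ k) (hβ : 0 ≤ β) (hτ : 0 ≤ τ)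
    (hτ1 : τ ≤ 1) (h : 512 * k ^ 5 * β ≤ τ ^ 2) : 4 * ((4 * k) ^ 2) ^ 6 * β ^ 3 ≤ τ ^ 5 := by
  have h3 := pow_le_pow_left₀ (by positivity) h 3
  have hk3 : 1 ≤ k ^ 3 := one_le_pow₀ hk
  calc 4 * ((4 * k) ^ 2) ^ 6 * β ^ 3 ≤ 4 * ((4 * k) ^ 2) ^ 6 * β ^ 3 * (2 * k ^ 3) := by
        nlinarith [show 0 ≤ 4 * ((4 * k) ^ 2) ^ 6 * β ^ 3 by positivity]
    _ = (512 * k ^ 5 * β) ^ 3 := by ring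
    _ ≤ (τ ^ 2) ^ 3 := h3
    _ ≤ τ ^ 5 := by nlinarith [pow_le_one₀ hτ hτ1 (n := 5), pow_nonneg hτ 5]

lemma pow_four_le_exp_of_mul_exp_neg_le {x a M : ℝ}
    (h : x ^ 4 * Real.exp (-a * M / 2) ≤ 1 / 100) : (x ^ 2) ^ 4 ≤ Real.exp (a * M) := by
  have hx4 : x ^ 4 ≤ Real.exp (a * M / 2) := by
    rw [show -a * M / 2 = -(a * M / 2) by ring, Real.exp_neg, ← div_eq_mul_inv,
      div_le_iff₀ (Real.exp_pos _)] at h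
    linarith [Real.exp_pos (a * M / 2)]
  calc (x ^ 2) ^ 4 = (x ^ 4) ^ 2 := by ring
    _ ≤ Real.exp (a * M / 2) ^ 2 := pow_le_pow_left₀ (by positivity) hx4 2
    _ = Real.exp (a * M) := by rw [← Real.exp_nat_mul]; ring_nf

lemma one_sub_mul_le_sum_integral {k₀ : ℕ} {ε₀ x : ℝ} {p : ℕ → ℝ} {g : ℕ → Measure ℝ}
    [∀ k, IsFiniteMeasure (g k)] {u : ℝ → ℝ} (hu : Antitone u) (hu01 : ∀ x, u x ∈ Icc (0 : ℝ) 1)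
    (hp : ∀ k ∈ Finset.Icc 1 k₀, 0 ≤ p k) (hpsum : ∑ k ∈ Finset.Icc 1 k₀, p k = 1)
    (hg : ∀ k : ℕ, 1 ≤ k → k ≤ k₀ → 1 - ε₀ ≤ (g k).real (Ioi 0)) :
    (1 - ε₀) * u x ≤ ∑ k ∈ Finset.Icc 1 k₀, p k * ∫ y, (1 - (1 - u (x - y)) ^ k) ∂g k := by
  have hum := hu.measurable
  calc (1 - ε₀) * u x = ∑ k ∈ Finset.Icc 1 k₀, p k * ((1 - ε₀) * u x) := by
        rw [← Finset.sum_mul, hpsum, one_mul]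
    _ ≤ _ := ?_
  refine Finset.sum_le_sum fun k hk => mul_le_mul_of_nonneg_left ?_ (hp k hk)
  obtain ⟨hk1, hk2⟩ := Finset.mem_Icc.1 hk
  have hQ : ∀ y, 1 - (1 - u (x - y)) ^ k ∈ Icc (0 : ℝ) 1 :=
    fun y => one_sub_one_sub_pow_mem_Icc k (hu01 _).1 (hu01 _).2
  have hint : Integrable (fun y => 1 - (1 - u (x - y)) ^ k) (g k) :=
    Integrable.of_mem_Icc 0 1 (by fun_prop : Measurable _).aemeasurable
      (ae_of_all _ hQ)
  calc (1 - ε₀) * u x ≤ (g k).real (Ioi 0) • u x :=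
        mul_le_mul_of_nonneg_right (hg k hk1 hk2) (hu01 x).1
    _ ≤ ∫ y in Ioi 0, (1 - (1 - u (x - y)) ^ k) ∂g k :=
        setIntegral_ge_of_const_le measurableSet_Ioi (measure_ne_top _ _)
          (fun y hy => (hu (by linarith [mem_Ioi.1 hy])).trans
            (le_one_sub_one_sub_pow hk1 (hu01 _).1 (hu01 _).2)) hint.integrableOn
    _ ≤ ∫ y, (1 - (1 - u (x - y)) ^ k) ∂g k :=
        setIntegral_le_integral hint (ae_of_all _ fun y => (hQ y).1)

lemma le_two_mul_div_of_sandwich {k₀ : ℕ} {ε₀ ε x₁ x₂ : ℝ} {p : ℕ → ℝ} {g : ℕ → Measure ℝ}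
    [∀ k, IsFiniteMeasure (g k)] {u v : ℝ → ℝ} (hu : Antitone u)
    (hu01 : ∀ x, u x ∈ Icc (0 : ℝ) 1) (hp : ∀ k ∈ Finset.Icc 1 k₀, 0 ≤ p k)
    (hpsum : ∑ k ∈ Finset.Icc 1 k₀, p k = 1)
    (hg : ∀ k : ℕ, 1 ≤ k → k ≤ k₀ → 1 - ε₀ ≤ (g k).real (Ioi 0)) (hε₀ : ε₀ < 1)
    (hsandwich : ∑ k ∈ Finset.Icc 1 k₀, p k * ∫ y, (1 - (1 - u (x₂ - y)) ^ k) ∂g k ≤ v x₂)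
    (hvx₁ : 0 < v x₁) (hε : ε = v x₂ / v x₁ - 1) (hε1 : ε ≤ 1) :
    u x₂ ≤ 2 * v x₁ / (1 - ε₀) := by
  have h1 := (one_sub_mul_le_sum_integral hu hu01 hp hpsum hg).trans hsandwich
  have h2 : v x₂ = (1 + ε) * v x₁ := by rw [hε]; field_simp; ring
  rw [le_div_iff₀ (by linarith)]
  nlinarith

lemma continuousWithinAt_Iic_sub {u : ℝ → ℝ} (hu : ∀ x, ContinuousWithinAt u (Ici x) x)
    (x y : ℝ) : ContinuousWithinAt (fun y => u (x - y)) (Iic y) y :=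
  (hu (x - y)).comp (continuous_sub_left x).continuousWithinAt
    fun _ hz => sub_le_sub_left (mem_Iic.1 hz) x

lemma exists_threshold_crossing {w : ℝ → ℝ} {τ y₀ r : ℝ} (hw : Monotone w)
    (hlc : ∀ y, ContinuousWithinAt w (Iic y) y) (hy₀ : y₀ ≤ r) (hτ : w y₀ ≤ τ) :
    ∃ ρ ≤ r, (∀ y ≤ ρ, w y ≤ τ) ∧ ∀ y ∈ Ioc ρ r, τ < w y := by
  set S := {y | y ≤ r ∧ w y ≤ τ}
  have hS : S.Nonempty := ⟨y₀, hy₀, hτ⟩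
  have hSb : BddAbove S := ⟨r, fun y hy => hy.1⟩
  have hρ : w (sSup S) ≤ τ := by
    by_contra! h
    obtain ⟨y, hy, hyS⟩ := (((hlc _).eventually (lt_mem_nhds h)).and_frequently
      ((isLUB_csSup hS hSb).frequently_mem hS)).exists
    exact (hy.trans_le hyS.2).false
  refine ⟨sSup S, csSup_le hS fun y hy => hy.1, fun y hy => (hw hy).trans hρ, fun y hy => ?_⟩
  by_contra! h
  exact hy.1.not_ge (le_csSup hSb ⟨hy.2, h⟩)

lemma sum_setIntegral_Iic_le_at_crossing {k₀ : ℕ} {p : ℕ → ℝ} {g : ℕ → Measure ℝ}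
    [∀ k, IsFiniteMeasure (g k)] {u : ℝ → ℝ} {x₁ x₂ M ε β τ ρ r : ℝ} (hu : Antitone u)
    (hu01 : ∀ x, u x ∈ Icc (0 : ℝ) 1) (hp : ∀ k ∈ Finset.Icc 1 k₀, 0 ≤ p k)
    (hx₂ : x₂ = x₁ - M) (hrM : r ≤ M) (hρr : ρ ≤ r) (hε1 : ε ≤ 1)
    (hux₂ : u x₂ ≤ β) (hβτ : 2 * k₀ * β ≤ τ) (habove : ∀ y ∈ Ioc ρ r, τ < u (x₂ - y))
    (h : ∑ k ∈ Finset.Icc 1 k₀, p k * ∫ y in Iic r, (1 - (1 - u (x₂ - y)) ^ k) ∂(g k)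
      ≤ (1 + ε) * ∑ k ∈ Finset.Icc 1 k₀, p k * ∫ y in Iic r, (k : ℝ) * u (x₁ - y) ∂(g k)) :
    ∑ k ∈ Finset.Icc 1 k₀, p k * ∫ y in Iic ρ, (1 - (1 - u (x₂ - y)) ^ k) ∂(g k)
      ≤ (1 + ε) * ∑ k ∈ Finset.Icc 1 k₀, p k * ∫ y in Iic ρ, (k : ℝ) * u (x₁ - y) ∂(g k) := by
  have hum := hu.measurable
  refine sum_setIntegral_Iic_le_of_le_on_Ioc (F := fun k y => 1 - (1 - u (x₂ - y)) ^ k)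
    (G := fun k y => (k : ℝ) * u (x₁ - y)) hp hρr
    (fun k => Integrable.of_mem_Icc 0 1 (by fun_prop : Measurable _).aemeasurable
      (ae_of_all _ fun y => one_sub_one_sub_pow_mem_Icc k (hu01 _).1 (hu01 _).2))
    (fun k => (Integrable.of_mem_Icc 0 1 (by fun_prop : Measurable fun y => u (x₁ - y)).aemeasurable
      (ae_of_all _ fun y => hu01 _)).const_mul _) (fun k hk y hy => ?_) h
  obtain ⟨hk1, hk2⟩ := Finset.mem_Icc.1 hk
  -- for `y ≤ M` the point `x₁ - y` lies to the right of `x₂`, where `u` is already small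
  have hu₁ : u (x₁ - y) ≤ β := (hu (by linarith [hy.2])).trans hux₂
  have hk : (k : ℝ) ≤ k₀ := by exact_mod_cast hk2
  have h1 := mul_le_mul hk hu₁ (hu01 _).1 (by positivity)
  have h2 : (1 + ε) * (k * u (x₁ - y)) ≤ 2 * (k * u (x₁ - y)) :=
    mul_le_mul_of_nonneg_right (by linarith) (mul_nonneg (Nat.cast_nonneg k) (hu01 _).1)
  linarith [habove y hy, le_one_sub_one_sub_pow hk1 (hu01 (x₂ - y)).1 (hu01 _).2]

lemma flat_of_le_sInf_flatSet {k₀ : ℕ} {u : ℝ → ℝ} {x₁ x₂ M r : ℝ}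
    (hurc : ∀ x, ContinuousWithinAt u (Ici x) x) (hx₂ : x₂ = x₁ - M) (hMr : M / 2 < r)
    (hrq : (flatSet k₀ u x₁ x₂ M).Nonempty → r ≤ sInf (flatSet k₀ u x₁ x₂ M)) :
    ∀ y ∈ Icc (M / 2) r, u (x₂ - y) ≤ (4 * (k₀ : ℝ)) ^ 2 * u (x₂ - (y - M)) := by
  have hout : ∀ y, M / 2 ≤ y → y ∉ flatSet k₀ u x₁ x₂ M →
      u (x₂ - y) ≤ (4 * (k₀ : ℝ)) ^ 2 * u (x₁ - y) :=
    fun y hy h => not_lt.1 fun h' => h ⟨hy, h'⟩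
  intro y ⟨hy, hyr⟩
  rw [show x₂ - (y - M) = x₁ - y by rw [hx₂]; ring]
  by_cases hmem : y ∈ flatSet k₀ u x₁ x₂ M
  · have hbdd : BddBelow (flatSet k₀ u x₁ x₂ M) := ⟨M / 2, fun z hz => hz.1⟩
    have hq : r ≤ sInf (flatSet k₀ u x₁ x₂ M) := hrq ⟨y, hmem⟩
    -- then `y = r = q`, and flatness on `[M/2, q)` passes to `q` by right continuity of `u`
    refine ContinuousWithinAt.closure_le (s := Ico (M / 2) y) ?_
      ((continuousWithinAt_Iic_sub hurc x₂ y).mono fun _ hz => hz.2.le)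
      (((continuousWithinAt_Iic_sub hurc x₁ y).mono fun _ hz => hz.2.le).const_mul _)
      fun z hz => hout z hz.1 (notMem_of_lt_csInf (hz.2.trans_le (hyr.trans hq)) hbdd)
    rw [closure_Ico (hMr.trans_le (hq.trans (csInf_le hbdd hmem))).ne]
    exact right_mem_Icc.2 hy
  · exact hout y hy hmem

lemma le_pow_mul_of_flat {w : ℝ → ℝ} {K β M r : ℝ} (hw : Monotone w) (hK : 1 ≤ K)
    (hβ0 : 0 ≤ β) (hM : 0 < M) (hMr : M / 2 ≤ r)
    (hflat : ∀ y ∈ Icc (M / 2) r, w y ≤ K * w (y - M)) (hβ : w 0 ≤ β) :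
    ∀ n : ℕ, ∀ y ≤ r, y ≤ M / 2 + n * M → w y ≤ K ^ (n + 1) * β := by
  intro n
  induction n with
  | zero =>
    intro y _ hy
    rw [Nat.cast_zero, zero_mul, add_zero] at hy
    calc w y ≤ w (M / 2) := hw hy
      _ ≤ K * w (M / 2 - M) := hflat _ ⟨le_rfl, hMr⟩
      _ ≤ K ^ (0 + 1) * β := by
        rw [zero_add, pow_one]
        exact mul_le_mul_of_nonneg_left ((hw (by linarith)).trans hβ) (by linarith)
  | succ n ih =>
    intro y hyr hy
    have hnM : 0 ≤ (n : ℝ) * M := mul_nonneg n.cast_nonneg hM.le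
    rcases le_or_gt y (M / 2 + n * M) with h | h
    · exact (ih y hyr h).trans
        (mul_le_mul_of_nonneg_right (pow_le_pow_right₀ hK (by omega)) hβ0)
    · push_cast at hy
      calc w y ≤ K * w (y - M) := hflat y ⟨by linarith, hyr⟩
        _ ≤ K * (K ^ (n + 1) * β) :=
          mul_le_mul_of_nonneg_left (ih _ (by linarith) (by linarith)) (by linarith)
        _ = K ^ (n + 1 + 1) * β := by ring

lemma pow_mul_le_of_flat {w : ℝ → ℝ} {K M r : ℝ} (hK : 0 ≤ K) (hM : 0 ≤ M)
    (hflat : ∀ y ∈ Icc (M / 2) r, w y ≤ K * w (y - M)) :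
    ∀ n : ℕ, ∀ y ≤ r, M / 2 + n * M ≤ y → w y ≤ K ^ n * w (y - n * M) := by
  intro n
  induction n with
  | zero => intro y _ _; simp
  | succ n ih =>
    intro y hyr hy
    have hnM : 0 ≤ (n : ℝ) * M := mul_nonneg n.cast_nonneg hM
    push_cast at hy
    calc w y ≤ K ^ n * w (y - n * M) := ih y hyr (by linarith)
      _ ≤ K ^ n * (K * w (y - n * M - M)) :=
        mul_le_mul_of_nonneg_left (hflat _ ⟨by linarith, by linarith⟩) (pow_nonneg hK n)
      _ = K ^ (n + 1) * w (y - ((n + 1 : ℕ) : ℝ) * M) := by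
        rw [pow_succ, mul_assoc, Nat.cast_succ, add_mul, one_mul, sub_add_eq_sub_sub]

lemma le_crossing_and_le_pow_mul_of_flat {w : ℝ → ℝ} {K β M τ ρ r : ℝ} {n : ℕ} (hw : Monotone w)
    (hK : 1 ≤ K) (hβ0 : 0 ≤ β) (hM : 0 < M) (hMr : M / 2 ≤ r)
    (hflat : ∀ y ∈ Icc (M / 2) r, w y ≤ K * w (y - M)) (hβ : w 0 ≤ β)
    (hKβ : K ^ (n + 1) * β ≤ τ) (hρr : ρ < r) (habove : ∀ y ∈ Ioc ρ r, τ < w y) :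
    M / 2 + n * M ≤ ρ ∧ ∀ y ∈ Ioc (ρ - n * M) r, τ ≤ K ^ n * w y := by
  have hρ : M / 2 + n * M ≤ ρ := by
    by_contra! h
    have hσ : min r (M / 2 + n * M) ∈ Ioc ρ r := ⟨lt_min hρr h, min_le_left _ _⟩
    have := le_pow_mul_of_flat hw hK hβ0 hM hMr hflat hβ n _ hσ.2 (min_le_right _ _)
    linarith [habove _ hσ]
  refine ⟨hρ, fun y hy => ?_⟩
  have hσ : min r (y + n * M) ∈ Ioc ρ r := ⟨lt_min hρr (by linarith [hy.1]), min_le_left _ _⟩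
  calc τ ≤ w (min r (y + n * M)) := (habove _ hσ).le
    _ ≤ K ^ n * w (min r (y + n * M) - n * M) :=
      pow_mul_le_of_flat (by linarith) hM.le hflat n _ hσ.2 (by linarith [hσ.1])
    _ ≤ K ^ n * w y :=
      mul_le_mul_of_nonneg_left (hw (by linarith [min_le_right r (y + n * M)]))
        (pow_nonneg (by linarith) n)

lemma measureReal_Ioi_le_two_mul_Ioc {μ : Measure ℝ} [IsFiniteMeasure μ] {a M₀ z r : ℝ}
    (hdecay : ∀ M' x : ℝ, M₀ < M' → 0 ≤ x →
      μ.real (Ioi (x + M')) ≤ Real.exp (-a * M') * μ.real (Ioi x))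
    (hz : 0 ≤ z) (hzr : z ≤ r) (hM₀ : M₀ < r - z) (hexp : Real.exp (-a * (r - z)) ≤ 1 / 2) :
    μ.real (Ioi z) ≤ 2 * μ.real (Ioc z r) := by
  have hr := hdecay (r - z) z hM₀ hz
  rw [add_sub_cancel] at hr
  have hunion : μ.real (Ioi z) = μ.real (Ioc z r) + μ.real (Ioi r) := by
    rw [← measureReal_union Ioc_disjoint_Ioi_same measurableSet_Ioi, Ioc_union_Ioi_eq_Ioi hzr]
  nlinarith [measureReal_nonneg (μ := μ) (s := Ioi z)]

lemma exists_pow_cube_between {K D : ℝ} (hK : 1 < K) (hD : 1 ≤ D) :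
    ∃ n : ℕ, D < (K ^ (n + 1)) ^ 3 ∧ (K ^ (n + 1)) ^ 3 ≤ K ^ 3 * D := by
  obtain ⟨n, h1, h2⟩ := exists_nat_pow_near hD (one_lt_pow₀ hK three_ne_zero)
  refine ⟨n, by rwa [← pow_mul, mul_comm, pow_mul], ?_⟩
  rw [← pow_mul, mul_comm, pow_mul, pow_succ, mul_comm]
  exact mul_le_mul_of_nonneg_left h1 (by positivity)

lemma exp_neg_mul_mul_pow_le_one {a M K : ℝ} (hKexp : K ^ 4 ≤ Real.exp (a * M)) (n : ℕ) :
    Real.exp (-a * (n * M)) * (K ^ n) ^ 4 ≤ 1 := by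
  rw [show -a * (n * M) = n * (-a * M) by ring, Real.exp_nat_mul, ← pow_mul, mul_comm n 4,
    pow_mul, ← mul_pow]
  refine pow_le_one₀ (by positivity) ?_
  rw [neg_mul, Real.exp_neg]
  exact inv_mul_le_one_of_le₀ hKexp (Real.exp_pos _).le

lemma mul_measureReal_le_setIntegral {μ : Measure ℝ} [IsFiniteMeasure μ] {w : ℝ → ℝ}
    {s t : Set ℝ} {c : ℝ} (hwm : Measurable w) (hw01 : ∀ y, w y ∈ Icc (0 : ℝ) 1)
    (hs : MeasurableSet s) (hst : s ⊆ t) (h : ∀ y ∈ s, c ≤ w y) :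
    c * μ.real s ≤ ∫ y in t, w y ∂μ := by
  have hint := Integrable.of_mem_Icc (μ := μ) 0 1 hwm.aemeasurable (ae_of_all _ hw01)
  rw [mul_comm, ← smul_eq_mul]
  exact (setIntegral_ge_of_const_le hs (measure_ne_top _ _) h hint.integrableOn).trans
    (setIntegral_mono_set hint.integrableOn (ae_of_all _ fun y => (hw01 y).1) hst.eventuallyLE)

lemma le_half_mul_of_tail_bounds {T Z m Θ e L τ : ℝ} (hT : 0 ≤ T) (hZ : 0 ≤ Z) (hL : 0 < L)
    (hτ : 0 < τ) (hTZ : T ≤ e * Z) (hZm : Z ≤ 2 * m) (hm : τ * m ≤ L * Θ)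
    (he : e * L ^ 4 ≤ 1) (hL3 : 4 < L ^ 3 * τ ^ 2) : T ≤ τ / 2 * Θ := by
  have h1 : T * L ^ 4 ≤ 2 * m := by
    nlinarith [mul_le_mul_of_nonneg_right hTZ (by positivity : 0 ≤ L ^ 4)]
  have h2 : T * L ^ 3 * τ ≤ 2 * Θ := by
    refine le_of_mul_le_mul_left ?_ hL
    nlinarith [mul_le_mul_of_nonneg_left h1 hτ.le]
  nlinarith [mul_le_mul_of_nonneg_right h2 hτ.le, mul_le_mul_of_nonneg_left hL3.le hT]

lemma measureReal_Ioi_le_of_flat {μ : Measure ℝ} [IsFiniteMeasure μ] {w : ℝ → ℝ}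
    {a M M₀ K β τ ρ r : ℝ} (hw : Monotone w) (hwm : Measurable w)
    (hw01 : ∀ y, w y ∈ Icc (0 : ℝ) 1)
    (hdecay : ∀ M' x : ℝ, M₀ < M' → 0 ≤ x →
      μ.real (Ioi (x + M')) ≤ Real.exp (-a * M') * μ.real (Ioi x))
    (ha : 0 < a) (hM : 0 < M) (hM₀ : M₀ < M) (hK : 2 ≤ K) (hKexp : K ^ 4 ≤ Real.exp (a * M))
    (hMr : M / 2 ≤ r) (hflat : ∀ y ∈ Icc (M / 2) r, w y ≤ K * w (y - M)) (hβ : w 0 ≤ β)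
    (hτ : 0 < τ) (hτ1 : τ ≤ 1) (hsmall : 4 * K ^ 6 * β ^ 3 ≤ τ ^ 5)
    (hρr : ρ < r) (habove : ∀ y ∈ Ioc ρ r, τ < w y) :
    μ.real (Ioi ρ) ≤ τ / 2 * ∫ y in Iic r, w y ∂μ := by
  have hβ0 : 0 ≤ β := (hw01 0).1.trans hβ
  -- `j` is the least number of steps of length `M` with `τ² K^(3j) > 4`
  obtain ⟨n, hL3, hL3'⟩ := exists_pow_cube_between (K := K) (D := 4 / τ ^ 2) (by linarith)
    (by rw [le_div_iff₀ (by positivity)]; nlinarith)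
  set j := n + 1
  have hL0 : 0 < K ^ j := by positivity
  have hLKβ : K ^ (j + 1) * β ≤ τ := by
    rw [pow_succ]
    refine (pow_le_pow_iff_left₀ (by positivity) hτ.le three_ne_zero).1 ?_
    calc (K ^ j * K * β) ^ 3 = (K ^ j) ^ 3 * (K ^ 3 * β ^ 3) := by ring
      _ ≤ K ^ 3 * (4 / τ ^ 2) * (K ^ 3 * β ^ 3) :=
        mul_le_mul_of_nonneg_right hL3' (by positivity)
      _ = 4 * K ^ 6 * β ^ 3 / τ ^ 2 := by ring
      _ ≤ τ ^ 3 := by rw [div_le_iff₀ (by positivity)]; nlinarith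
  obtain ⟨hρ, hlow⟩ :=
    le_crossing_and_le_pow_mul_of_flat hw (by linarith) hβ0 hM hMr hflat hβ hLKβ hρr habove
  have hjM : M ≤ (j : ℝ) * M := le_mul_of_one_le_left hM.le (by simp [j])
  set z := ρ - j * M
  have hmass := mul_measureReal_le_setIntegral (μ := μ) (c := τ / K ^ j) hwm hw01
    measurableSet_Ioc Ioc_subset_Iic_self fun y hy => (div_le_iff₀' hL0).2 (hlow y hy)
  rw [div_mul_eq_mul_div, div_le_iff₀' hL0] at hmass
  have hexp : Real.exp (-a * (r - z)) ≤ 1 / 2 := by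
    have h1 := exp_neg_mul_mul_pow_le_one hKexp 1
    rw [Nat.cast_one, one_mul, pow_one] at h1
    refine (Real.exp_le_exp.2 (by nlinarith : -a * (r - z) ≤ -a * M)).trans ?_
    nlinarith [pow_le_pow_left₀ (by norm_num) hK 4, Real.exp_pos (-a * M)]
  have hdec := hdecay _ z (hM₀.trans_le hjM) (by linarith)
  rw [sub_add_cancel] at hdec
  exact le_half_mul_of_tail_bounds measureReal_nonneg measureReal_nonneg hL0 hτ hdec
    (measureReal_Ioi_le_two_mul_Ioc hdecay (by linarith) (by linarith) (by linarith) hexp) hmass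
    (exp_neg_mul_mul_pow_le_one hKexp j) (by rwa [div_lt_iff₀ (by positivity)] at hL3)

lemma setIntegral_sq_le_of_flat {μ : Measure ℝ} [IsFiniteMeasure μ] {w : ℝ → ℝ}
    {a M M₀ K β τ ρ r : ℝ} (hw : Monotone w) (hwm : Measurable w)
    (hw01 : ∀ y, w y ∈ Icc (0 : ℝ) 1)
    (hdecay : ∀ M' x : ℝ, M₀ < M' → 0 ≤ x →
      μ.real (Ioi (x + M')) ≤ Real.exp (-a * M') * μ.real (Ioi x))
    (ha : 0 < a) (hM : 0 < M) (hM₀ : M₀ < M) (hK : 2 ≤ K) (hKexp : K ^ 4 ≤ Real.exp (a * M))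
    (hMr : M / 2 ≤ r) (hflat : ∀ y ∈ Icc (M / 2) r, w y ≤ K * w (y - M)) (hβ : w 0 ≤ β)
    (hτ : 0 < τ) (hτ1 : τ ≤ 1) (hsmall : 4 * K ^ 6 * β ^ 3 ≤ τ ^ 5)
    (hρr : ρ ≤ r) (hbelow : ∀ y ≤ ρ, w y ≤ τ) (habove : ∀ y ∈ Ioc ρ r, τ < w y) :
    ∫ y in Iic r, w y ^ 2 ∂μ ≤ 2 * τ * ∫ y in Iic r, w y ∂μ := by
  have hint := Integrable.of_mem_Icc (μ := μ) 0 1 hwm.aemeasurable (ae_of_all _ hw01)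
  have hsq01 : ∀ y, w y ^ 2 ∈ Icc (0 : ℝ) 1 :=
    fun y => ⟨sq_nonneg _, pow_le_one₀ (hw01 y).1 (hw01 y).2⟩
  have hint2 := Integrable.of_mem_Icc (μ := μ) 0 1 (hwm.pow_const 2).aemeasurable
    (ae_of_all _ hsq01)
  have hΘ : 0 ≤ ∫ y in Iic r, w y ∂μ := integral_nonneg fun y => (hw01 y).1
  have hlow : ∫ y in Iic ρ, w y ^ 2 ∂μ ≤ τ * ∫ y in Iic r, w y ∂μ :=
    (setIntegral_sq_le_mul measurableSet_Iic hwm hw01 hbelow).trans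
      (mul_le_mul_of_nonneg_left (setIntegral_mono_set hint.integrableOn
        (ae_of_all _ fun y => (hw01 y).1) (Iic_subset_Iic.2 hρr).eventuallyLE) hτ.le)
  have hhigh : ∫ y in Ioc ρ r, w y ^ 2 ∂μ ≤ τ * ∫ y in Iic r, w y ∂μ := by
    rcases hρr.eq_or_lt with rfl | hlt
    · simpa using mul_nonneg hτ.le hΘ
    calc ∫ y in Ioc ρ r, w y ^ 2 ∂μ ≤ μ.real (Ioc ρ r) := by
          simpa using setIntegral_mono_on hint2.integrableOn (integrable_const (1 : ℝ)).integrableOn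
            measurableSet_Ioc fun y _ => (hsq01 y).2
      _ ≤ μ.real (Ioi ρ) := measureReal_mono Ioc_subset_Ioi_self
      _ ≤ τ / 2 * ∫ y in Iic r, w y ∂μ := measureReal_Ioi_le_of_flat hw hwm hw01 hdecay ha hM hM₀
          hK hKexp hMr hflat hβ hτ hτ1 hsmall hlt habove
      _ ≤ τ * ∫ y in Iic r, w y ∂μ := by nlinarith
  have hsplit : ∫ y in Iic r, w y ^ 2 ∂μ
      = ∫ y in Iic ρ, w y ^ 2 ∂μ + ∫ y in Ioc ρ r, w y ^ 2 ∂μ := by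
    rw [← setIntegral_union (Iic_disjoint_Ioc le_rfl) measurableSet_Ioc hint2.integrableOn
      hint2.integrableOn, Iic_union_Ioc_eq_Iic hρr]
  linarith

theorem stmt_14_general
    (k₀ : ℕ) (hk₀ : 1 < k₀)
    (m₀ ε₀ a M₀ c₁ ε₁ b M κ : ℝ)
    (hε₀ : 0 < ε₀ ∧ ε₀ < min ((1 / 4) * Real.log m₀) 1)
    (ha : 0 < a) (hc₁ : 1 ≤ c₁)
    (hc₁' : ∀ k : ℕ, 1 ≤ k → k ≤ k₀ → ∀ w : ℝ, 0 ≤ w → w ≤ 1 →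
      (k : ℝ) * w - c₁ * w ^ 2 ≤ 1 - (1 - w) ^ k ∧ 1 - (1 - w) ^ k ≤ (k : ℝ) * w)
    (hε₁ : 0 < ε₁ ∧ ε₁ < 1 / 100) (hM : 100 < M)
    (hκ : 0 < κ ∧ κ < 1 / 100)
    (p : ℕ → ℝ) (hp : ∀ k ∈ Finset.Icc 1 k₀, 0 ≤ p k)
    (hpsum : ∑ k ∈ Finset.Icc 1 k₀, p k = 1)
    -- conditions (i)–(vi) on the parameters
    (hcondi : 4 * M₀ < M ∧ (4 * (k₀ : ℝ)) ^ 4 * Real.exp (-a * M / 2) ≤ 1 / 100)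
    (hcondii : 8 * (2 * (k₀ : ℝ)) ^ ((5 : ℝ) / 2) *
        ε₁ ^ (1 / (2 * Real.log b) - 3 / 2 : ℝ) / ((1 - ε₀) * κ ^ ((3 : ℝ) / 2))
      < 1 / (2 * c₁))
    -- the displacement measures
    (g : ℕ → Measure ℝ) (hg : ∀ k, IsProbabilityMeasure (g k))
    (hgtail0 : ∀ k : ℕ, 1 ≤ k → k ≤ k₀ → 1 - ε₀ ≤ ((g k) (Ioi (0 : ℝ))).toReal)
    (hgdecay : ∀ k : ℕ, 1 ≤ k → k ≤ k₀ → ∀ M' x : ℝ, M₀ < M' → 0 ≤ x →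
      ((g k) (Ioi (x + M'))).toReal ≤ Real.exp (-a * M') * ((g k) (Ioi x)).toReal)
    -- the two functions and the sandwich bound
    (u v : ℝ → ℝ)
    (hu01 : ∀ x, u x ∈ Icc (0 : ℝ) 1)
    (huanti : Antitone u)
    (hurc : ∀ x, ContinuousWithinAt u (Ici x) x)
    (hsandwich : ∀ x : ℝ,
      ∑ k ∈ Finset.Icc 1 k₀, p k * ∫ y : ℝ, (1 - (1 - u (x - y)) ^ k) ∂(g k) ≤ v x ∧
      v x ≤ ∑ k ∈ Finset.Icc 1 k₀, p k * ∫ y : ℝ, (k : ℝ) * u (x - y) ∂(g k))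
    -- truncation setup
    (x₁ x₂ : ℝ) (hx₂ : x₂ = x₁ - M) (hvx₁ : 0 < v x₁)
    (ε : ℝ) (hεdef : ε = v x₂ / v x₁ - 1) (hεrange : 0 ≤ ε ∧ ε < ε₁)
    (f₀ : ℝ) (hf₀ : f₀ = v x₁)
    (hf₀small : f₀ < (ε₁ - ε) ^ (1 / Real.log b : ℝ) * Real.exp (-Real.log 2))
    (δ ε' ε'' : ℝ) (hδ : δ = κ * (ε₁ - ε)) (hε' : ε' = ε + δ)
    (hε'' : ε'' = ε + 2 * δ)
    (y₀ : ℝ)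
    (r : ℝ)
    (hrne : (flatSet k₀ u x₁ x₂ M).Nonempty →
      (4 * (k₀ : ℝ) * u (x₁ - (sInf (flatSet k₀ u x₁ x₂ M) + M / 2))
          ≤ Function.leftLim u (x₂ - sInf (flatSet k₀ u x₁ x₂ M)) →
        r = min y₀ (sInf (flatSet k₀ u x₁ x₂ M))) ∧
      (¬ 4 * (k₀ : ℝ) * u (x₁ - (sInf (flatSet k₀ u x₁ x₂ M) + M / 2))
          ≤ Function.leftLim u (x₂ - sInf (flatSet k₀ u x₁ x₂ M)) →
        r = min y₀ (sInf (flatSet k₀ u x₁ x₂ M) - M / 2)))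
    -- the additional hypothesis: the truncated flatness inequality
    (htrunc :
      ∑ k ∈ Finset.Icc 1 k₀, p k * ∫ y in Iic r, (1 - (1 - u (x₂ - y)) ^ k) ∂(g k)
        ≤ (1 + ε') *
          ∑ k ∈ Finset.Icc 1 k₀, p k * ∫ y in Iic r, (k : ℝ) * u (x₁ - y) ∂(g k)) :
    ∃ k : ℕ, 1 ≤ k ∧ k ≤ k₀ ∧ ∃ r' : ℝ, r' ≤ r ∧ (M < r' → r' = r) ∧
      ∫ y in Iic r', u (x₂ - y) ∂(g k)
        ≤ (1 + ε'') * ∫ y in Iic r', u (x₁ - y) ∂(g k) := by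
  obtain ⟨hε₀0, hε₀1⟩ : 0 < ε₀ ∧ ε₀ < 1 := ⟨hε₀.1, hε₀.2.trans_le (min_le_right _ _)⟩
  have hk₀1 : (1 : ℝ) ≤ k₀ := by exact_mod_cast hk₀.le
  have hδ0 : 0 < δ := hδ ▸ mul_pos hκ.1 (by linarith [hεrange.2])
  have hδ1 : δ ≤ 1 / 2 := by nlinarith [hκ, hε₁, hεrange]
  set τ := δ / (4 * c₁)
  set β := 2 * f₀ / (1 - ε₀) with hβ
  have hτ0 : 0 < τ := by positivity
  have hτ1 : τ ≤ 1 := by rw [div_le_one (by positivity)]; linarith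
  have hsmall : 512 * (k₀ : ℝ) ^ 5 * β ≤ τ ^ 2 :=
    mul_le_sq_of_mul_le_cube hc₁ hε₀0.le hε₀1 hδ0 (by linarith) (hδ ▸ mul_le_of_rpow_conditions
      hk₀1 hc₁ hε₀0.le hε₀1 hκ.1 (by linarith [hκ.2]) (by linarith [hεrange.2])
      (by linarith [hεrange.1]) (by linarith [hε₁.2]) hcondii hf₀small)
  have hux₂ : u x₂ ≤ β := by
    rw [hβ, hf₀]
    exact le_two_mul_div_of_sandwich huanti hu01 hp hpsum hgtail0 hε₀1 (hsandwich x₂).1 hvx₁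
      hεdef (by linarith [hεrange.2, hε₁.2])
  set w : ℝ → ℝ := fun y => u (x₂ - y)
  have hw : Monotone w := fun y z h => huanti (by linarith)
  have hwm : Measurable w := huanti.measurable.comp (measurable_const.sub measurable_id)
  have hw0 : w 0 ≤ β := by simpa [w] using hux₂
  have hβ0 : 0 ≤ β := (hu01 x₂).1.trans hux₂
  have hβτ : 2 * k₀ * β ≤ τ := two_mul_mul_le_of_small hk₀1 hβ0 hτ0.le hτ1 hsmall
  obtain ⟨ρ, hρr, hbelow, habove⟩ := exists_threshold_crossing hw
    (continuousWithinAt_Iic_sub hurc x₂) (min_le_right 0 r)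
    ((hw (min_le_left 0 r)).trans
      (hw0.trans ((le_mul_of_one_le_left hβ0 (by linarith)).trans hβτ)))
  obtain ⟨r', hr', hr'M, htr, hsq⟩ : ∃ r' ≤ r, (M < r' → r' = r) ∧
      ∑ k ∈ Finset.Icc 1 k₀, p k * ∫ y in Iic r', (1 - (1 - u (x₂ - y)) ^ k) ∂(g k)
        ≤ (1 + ε') * ∑ k ∈ Finset.Icc 1 k₀, p k * ∫ y in Iic r', (k : ℝ) * u (x₁ - y) ∂(g k) ∧
      ∀ k ∈ Finset.Icc 1 k₀, ∫ y in Iic r', w y ^ 2 ∂(g k) ≤ 2 * τ * ∫ y in Iic r', w y ∂(g k) := by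
    by_cases hrM : r ≤ M
    · refine ⟨ρ, hρr, fun h => (h.not_ge (hρr.trans hrM)).elim,
        sum_setIntegral_Iic_le_at_crossing huanti hu01 hp hx₂ hrM hρr
          (by linarith [hε₁.2, hεrange.2]) hux₂ hβτ habove htrunc,
        fun k _ => setIntegral_sq_le_mul measurableSet_Iic hwm (fun y => hu01 _)
          fun y hy => (hbelow y hy).trans (by linarith)⟩
    have hrq : (flatSet k₀ u x₁ x₂ M).Nonempty → r ≤ sInf (flatSet k₀ u x₁ x₂ M) := fun hne =>
      (em _).elim (fun hc => ((hrne hne).1 hc).trans_le (min_le_right _ _))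
        fun hc => ((hrne hne).2 hc).trans_le ((min_le_right _ _).trans (by linarith))
    refine ⟨r, le_rfl, fun _ => rfl, htrunc, fun k hk => setIntegral_sq_le_of_flat
      (K := (4 * (k₀ : ℝ)) ^ 2) hw hwm (fun y => hu01 _)
      (hgdecay k (Finset.mem_Icc.1 hk).1 (Finset.mem_Icc.1 hk).2) ha (by linarith)
      (by linarith [hcondi.1])
      ((pow_le_pow_left₀ (by norm_num) (by linarith : (4 : ℝ) ≤ 4 * k₀) 2).trans' (by norm_num))
      (pow_four_le_exp_of_mul_exp_neg_le hcondi.2) (by linarith)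
      (flat_of_le_sInf_flatSet hurc hx₂ (by linarith) hrq) hw0 hτ0 hτ1
      (mul_pow_mul_cube_le_of_small hk₀1 hβ0 hτ0.le hτ1 hsmall) hρr hbelow habove⟩
  obtain ⟨k, hk1, hk2, hk⟩ := exists_integral_le_of_sum_integral_le
    (ν := fun k => (g k).restrict (Iic r')) hwm (fun y => hu01 _) (fun y => (hu01 _).1)
    (fun k h1 h2 t h0 h1' => (hc₁' k h1 h2 t h0 h1').1) hp (by rw [hpsum]; exact one_pos)
    (by linarith) hδ0.le (mul_div_cancel₀ δ (by positivity)).le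
    (by linarith [hε₁.2, hεrange.2]) hsq htr
  exact ⟨k, hk1, hk2, r', hr', hr'M, by rwa [show 1 + ε'' = 1 + ε' + δ by rw [hε'', hε']; ring]⟩

/-- linearization lemma: in the truncation setup, if additionally the
truncated inequality
`∑_k p_k·∫_{(−∞,r]} Q_{1,k}(u(x₂−y)) dg_k(y) ≤ (1+ε')·∑_k p_k·∫_{(−∞,r]} Q_{2,k}(u(x₁−y)) dg_k(y)`
holds, then there are an integer `1 ≤ k ≤ k₀` and a real `r' ≤ r`, with `r' = r`
whenever `r' > M`, such that
`∫_{(−∞,r']} u(x₂−y) dg_k(y) ≤ (1+ε'')·∫_{(−∞,r']} u(x₁−y) dg_k(y)`. -/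
theorem stmt_14
    (k₀ : ℕ) (hk₀ : 1 < k₀)
    (m₀ ε₀ a M₀ c₁ ε₁ b M κ : ℝ)
    (hm₀ : 1 < m₀) (hε₀ : 0 < ε₀ ∧ ε₀ < min ((1 / 4) * Real.log m₀) 1)
    (ha : 0 < a) (hM₀ : 0 < M₀) (hc₁ : 1 ≤ c₁)
    (hc₁' : ∀ k : ℕ, 1 ≤ k → k ≤ k₀ → ∀ w : ℝ, 0 ≤ w → w ≤ 1 →
      (k : ℝ) * w - c₁ * w ^ 2 ≤ 1 - (1 - w) ^ k ∧ 1 - (1 - w) ^ k ≤ (k : ℝ) * w)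
    (hε₁ : 0 < ε₁ ∧ ε₁ < 1 / 100) (hb : 1 < b) (hM : 100 < M)
    (hκ : 0 < κ ∧ κ < 1 / 100)
    (p : ℕ → ℝ) (hp : ∀ k ∈ Finset.Icc 1 k₀, 0 ≤ p k)
    (hpsum : ∑ k ∈ Finset.Icc 1 k₀, p k = 1)
    (hpmean : m₀ < ∑ k ∈ Finset.Icc 1 k₀, (k : ℝ) * p k)
    -- conditions (i)–(vi) on the parameters
    (hcondi : 4 * M₀ < M ∧ (4 * (k₀ : ℝ)) ^ 4 * Real.exp (-a * M / 2) ≤ 1 / 100)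
    (hcondii : 8 * (2 * (k₀ : ℝ)) ^ ((5 : ℝ) / 2) *
        ε₁ ^ (1 / (2 * Real.log b) - 3 / 2 : ℝ) / ((1 - ε₀) * κ ^ ((3 : ℝ) / 2))
      < 1 / (2 * c₁))
    (hcondiii : c₁ * ((1 + ε₁) / (1 - ε₀)) * ε₁ ^ (1 / Real.log b : ℝ)
      ≤ (∑ k ∈ Finset.Icc 1 k₀, (k : ℝ) * p k) - m₀)
    (hcondiv : 2 * (ε₁ + ε₀) + 6 * κ / Real.log b ≤ Real.log m₀ / 2)
    (hcondv : 2 * (ε₁ + ε₀ + Real.log (4 * (k₀ : ℝ))) - Real.log κ / Real.log b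
      ≤ a * M / (16 * Real.log b))
    (hcondvi : 2 * Real.log (4 * (k₀ : ℝ)) / M ≤ a / (16 * Real.log b))
    -- the displacement measures
    (g : ℕ → Measure ℝ) (hg : ∀ k, IsProbabilityMeasure (g k))
    (hgtail0 : ∀ k : ℕ, 1 ≤ k → k ≤ k₀ → 1 - ε₀ ≤ ((g k) (Ioi (0 : ℝ))).toReal)
    (hgdecay : ∀ k : ℕ, 1 ≤ k → k ≤ k₀ → ∀ M' x : ℝ, M₀ < M' → 0 ≤ x →
      ((g k) (Ioi (x + M'))).toReal ≤ Real.exp (-a * M') * ((g k) (Ioi x)).toReal)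
    -- the two functions and the sandwich bound
    (u v : ℝ → ℝ)
    (hu01 : ∀ x, u x ∈ Icc (0 : ℝ) 1) (hv01 : ∀ x, v x ∈ Icc (0 : ℝ) 1)
    (huanti : Antitone u) (hvanti : Antitone v)
    (hurc : ∀ x, ContinuousWithinAt u (Ici x) x)
    (hvrc : ∀ x, ContinuousWithinAt v (Ici x) x)
    (hsandwich : ∀ x : ℝ,
      ∑ k ∈ Finset.Icc 1 k₀, p k * ∫ y : ℝ, (1 - (1 - u (x - y)) ^ k) ∂(g k) ≤ v x ∧
      v x ≤ ∑ k ∈ Finset.Icc 1 k₀, p k * ∫ y : ℝ, (k : ℝ) * u (x - y) ∂(g k))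
    -- truncation setup
    (x₁ x₂ : ℝ) (hx₂ : x₂ = x₁ - M) (hvx₁ : 0 < v x₁)
    (ε : ℝ) (hεdef : ε = v x₂ / v x₁ - 1) (hεrange : 0 ≤ ε ∧ ε < ε₁)
    (f₀ : ℝ) (hf₀ : f₀ = v x₁)
    (hf₀small : f₀ < (ε₁ - ε) ^ (1 / Real.log b : ℝ) * Real.exp (-Real.log 2))
    (δ ε' ε'' ε3 : ℝ) (hδ : δ = κ * (ε₁ - ε)) (hε' : ε' = ε + δ)
    (hε'' : ε'' = ε + 2 * δ) (hε3 : ε3 = ε + 3 * δ)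
    (y₀ : ℝ) (hy₀ : y₀ = (1 / a) * Real.log (2 * (k₀ : ℝ) / (δ * f₀)))
    (r : ℝ)
    (hrne : (flatSet k₀ u x₁ x₂ M).Nonempty →
      (4 * (k₀ : ℝ) * u (x₁ - (sInf (flatSet k₀ u x₁ x₂ M) + M / 2))
          ≤ Function.leftLim u (x₂ - sInf (flatSet k₀ u x₁ x₂ M)) →
        r = min y₀ (sInf (flatSet k₀ u x₁ x₂ M))) ∧
      (¬ 4 * (k₀ : ℝ) * u (x₁ - (sInf (flatSet k₀ u x₁ x₂ M) + M / 2))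
          ≤ Function.leftLim u (x₂ - sInf (flatSet k₀ u x₁ x₂ M)) →
        r = min y₀ (sInf (flatSet k₀ u x₁ x₂ M) - M / 2)))
    (hrem : ¬ (flatSet k₀ u x₁ x₂ M).Nonempty → r = y₀)
    -- the additional hypothesis: the truncated flatness inequality
    (htrunc :
      ∑ k ∈ Finset.Icc 1 k₀, p k * ∫ y in Iic r, (1 - (1 - u (x₂ - y)) ^ k) ∂(g k)
        ≤ (1 + ε') *
          ∑ k ∈ Finset.Icc 1 k₀, p k * ∫ y in Iic r, (k : ℝ) * u (x₁ - y) ∂(g k)) :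
    ∃ k : ℕ, 1 ≤ k ∧ k ≤ k₀ ∧ ∃ r' : ℝ, r' ≤ r ∧ (M < r' → r' = r) ∧
      ∫ y in Iic r', u (x₂ - y) ∂(g k)
        ≤ (1 + ε'') * ∫ y in Iic r', u (x₁ - y) ∂(g k) :=
  stmt_14_general k₀ hk₀ m₀ ε₀ a M₀ c₁ ε₁ b M κ hε₀ ha hc₁ hc₁' hε₁ hM hκ p hp hpsum hcondi hcondii
    g hg hgtail0 hgdecay u v hu01 huanti hurc hsandwich x₁ x₂ hx₂ hvx₁ ε hεdef hεrange f₀ hf₀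
    hf₀small δ ε' ε'' hδ hε' hε'' y₀ r hrne htrunc
end

section
/- Let k₀ > 1 be an integer, a > 0, M₀ > 0 and M a real with M > 4·M₀ and (4k₀)⁴·e^{−aM/2} ≤ 1/100. Let g be a Borel probability measure on ℝ whose tail ḡ(x) = g((x,∞)) satisfies ḡ(x + M') ≤ e^{−aM'}·ḡ(x) for all M' > M₀ and x ≥ 0. Let u : ℝ → [0,1] be nonincreasing, x₁ ∈ ℝ, x₂ = x₁ − M, and let r > M be such that u(x₂ − y) ≤ (4k₀)²·u(x₁ − y) for all y ∈ [M/2, r]. Then ∫_{(M, r]} e^{a·y/8}·u(x₁ − y) dg(y) ≤ ∫_{(−∞, M]} u(x₁ − y) dg(y). -/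
/-!
Write `v y = u (x₁ - y)` (nondecreasing) and `C = (4k₀)²`, and cut `(M/2, ∞)` into the blocks
`(M/2 + jM, M/2 + (j+1)M]`, `j ∈ ℕ`. Iterating the flatness hypothesis `v (y + M) ≤ C v y`
along `M/2, 3M/2, …` bounds `v` on the `j`-th block by `C^(j+1) v(M/2)`; iterating the tail decay
in steps of `M/2` bounds the `g`-mass of the part of that block beyond `M` by
`e^(-aM(j+1)/2) ḡ(M/2)`. Against the weight `e^(ay/8)` the `j`-th block therefore contributes at
most `ρ^(j+1) v(M/2) ḡ(M/2)` with `ρ = C e^(-aM/4) ≤ 1/10`, so the left side is at most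
`v(M/2) ḡ(M/2) / 9`. The right side is at least
`v(M/2) g((M/2, M]) ≥ (1 - e^(-aM/2)) v(M/2) ḡ(M/2)`, and `e^(-aM/2) ≤ 1/100`.
-/

open MeasureTheory Set Real

theorem monotone_add_nat_mul (b : ℝ) {L : ℝ} (hL : 0 ≤ L) : Monotone fun j : ℕ => b + j * L :=
  monotone_const.add (Nat.mono_cast.mul_const hL)

theorem iUnion_Ioc_add_nat_mul {b L : ℝ} (hL : 0 < L) :
    ⋃ j : ℕ, Ioc (b + j * L) (b + (j + 1) * L) = Ioi b := by
  have hunb : ¬BddAbove (range fun j : ℕ => b + j * L) := by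
    rintro ⟨B, hB⟩
    obtain ⟨n, hn⟩ := exists_nat_gt ((B - b) / L)
    have := hB ⟨n, rfl⟩
    rw [div_lt_iff₀ hL] at hn
    simp only at this
    linarith
  simpa [Order.succ_eq_add_one] using iUnion_Ioc_map_succ_eq_Ioi
    (fun j => monotone_add_nat_mul b hL.le (Nat.zero_le j)) hunb

theorem hasSum_setIntegral_inter_Ioc_add_nat_mul {μ : Measure ℝ} {f : ℝ → ℝ} {s : Set ℝ}
    {b L : ℝ} (hL : 0 < L) (hs : MeasurableSet s) (hsb : s ⊆ Ioi b) (hf : IntegrableOn f s μ) :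
    HasSum (fun j : ℕ => ∫ y in Ioc (b + j * L) (b + (j + 1) * L) ∩ s, f y ∂μ)
      (∫ y in s, f y ∂μ) := by
  have hcover : ⋃ j : ℕ, Ioc (b + j * L) (b + (j + 1) * L) ∩ s = s := by
    rw [← iUnion_inter, iUnion_Ioc_add_nat_mul hL, inter_eq_right.2 hsb]
  have hdisj :
      Pairwise (Function.onFun Disjoint fun j : ℕ => Ioc (b + j * L) (b + (j + 1) * L)) := by
    simpa [Order.succ_eq_add_one] using (monotone_add_nat_mul b hL.le).pairwise_disjoint_on_Ioc_succ
  have := hasSum_integral_iUnion (fun j => measurableSet_Ioc.inter hs)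
    (hdisj.mono fun i j h => h.mono inter_subset_left inter_subset_left) (hcover.symm ▸ hf)
  rwa [hcover] at this

theorem measureReal_Ioi_add_nat_mul_le {μ : Measure ℝ} {x L q : ℝ} (hx : 0 ≤ x) (hL : 0 ≤ L)
    (hq : 0 ≤ q) (hdecay : ∀ z, 0 ≤ z → μ.real (Ioi (z + L)) ≤ q * μ.real (Ioi z)) (n : ℕ) :
    μ.real (Ioi (x + n * L)) ≤ q ^ n * μ.real (Ioi x) := by
  simpa using le_geom (u := fun k : ℕ => μ.real (Ioi (x + k * L))) hq n fun k _ => by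
    simpa [add_mul, add_assoc] using hdecay (x + k * L) (by positivity)

theorem le_pow_mul_of_le_mul_add {v : ℝ → ℝ} {s t L C : ℝ} (hL : 0 ≤ L) (hC : 0 ≤ C)
    (hv : ∀ y ∈ Icc s t, v (y + L) ≤ C * v y) {n : ℕ} (hn : s + n * L ≤ t + L) :
    v (s + n * L) ≤ C ^ n * v s := by
  simpa using le_geom (u := fun k : ℕ => v (s + k * L)) hC n fun k hk => by
    have hk' : (k : ℝ) + 1 ≤ n := by exact_mod_cast hk
    simpa [add_mul, add_assoc] using
      hv (s + k * L) ⟨le_add_of_nonneg_right (by positivity), by nlinarith⟩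

section Blocks

variable {g : Measure ℝ} {a M C r : ℝ} {v : ℝ → ℝ}

theorem measureReal_Ioc_inter_Ioc_le [IsFiniteMeasure g] (hM : 0 < M)
    (hdecay : ∀ x, 0 ≤ x → g.real (Ioi (x + M / 2)) ≤ exp (-a * M / 2) * g.real (Ioi x))
    (j : ℕ) :
    g.real (Ioc (M / 2 + j * M) (M / 2 + (j + 1) * M) ∩ Ioc M r) ≤
      exp (-a * M / 2) ^ (j + 1) * g.real (Ioi (M / 2)) := by
  calc _ ≤ g.real (Ioi (M / 2 + (j + 1 : ℕ) * (M / 2))) := by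
        refine measureReal_mono fun y ⟨⟨hjy, _⟩, hMy, _⟩ => ?_
        rcases j with _ | j
        · simp only [mem_Ioi]; push_cast; linarith
        · simp only [mem_Ioi] at hjy ⊢; push_cast at hjy ⊢; nlinarith
    _ ≤ _ := measureReal_Ioi_add_nat_mul_le (by positivity) (by positivity) (exp_nonneg _)
        hdecay (j + 1)

theorem le_pow_mul_of_mem_Ioc {j : ℕ} {y : ℝ} (hM : 0 < M) (hC : 0 ≤ C) (hv : Monotone v)
    (hflat : ∀ y ∈ Icc (M / 2) r, v (y + M) ≤ C * v y)
    (hy : y ∈ Ioc (M / 2 + j * M) (M / 2 + (j + 1) * M)) (hyr : y ≤ r) :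
    v y ≤ C ^ (j + 1) * v (M / 2) := by
  calc v y ≤ v (M / 2 + (j + 1 : ℕ) * M) := hv (by push_cast; exact hy.2)
    _ ≤ C ^ (j + 1) * v (M / 2) :=
        le_pow_mul_of_le_mul_add hM.le hC hflat (by push_cast; linarith [hy.1])

theorem exp_mul_exp_pow_le (ha : 0 ≤ a) (hM : 0 ≤ M) (j : ℕ) :
    exp (a * (M / 2 + (j + 1) * M) / 8) * exp (-a * M / 2) ^ (j + 1) ≤
      exp (-a * M / 4) ^ (j + 1) := by
  rw [← exp_nat_mul, ← exp_nat_mul, ← exp_add, exp_le_exp]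
  have : 0 ≤ a * M * j := by positivity
  push_cast
  nlinarith

theorem setIntegral_Ioc_inter_Ioc_exp_mul_le [IsFiniteMeasure g] (ha : 0 ≤ a) (hM : 0 < M)
    (hC : 0 ≤ C) (hv : Monotone v) (hv0 : ∀ y, 0 ≤ v y)
    (hflat : ∀ y ∈ Icc (M / 2) r, v (y + M) ≤ C * v y)
    (hdecay : ∀ x, 0 ≤ x → g.real (Ioi (x + M / 2)) ≤ exp (-a * M / 2) * g.real (Ioi x))
    (j : ℕ) :
    ∫ y in Ioc (M / 2 + j * M) (M / 2 + (j + 1) * M) ∩ Ioc M r, exp (a * y / 8) * v y ∂g ≤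
      (C * exp (-a * M / 4)) ^ (j + 1) * (v (M / 2) * g.real (Ioi (M / 2))) := by
  set B := exp (a * (M / 2 + (j + 1) * M) / 8) * (C ^ (j + 1) * v (M / 2))
  have hbound : ∀ y ∈ Ioc (M / 2 + j * M) (M / 2 + (j + 1) * M) ∩ Ioc M r,
      ‖exp (a * y / 8) * v y‖ ≤ B := by
    rintro y ⟨hy, -, hyr⟩
    rw [Real.norm_of_nonneg (mul_nonneg (exp_nonneg _) (hv0 y))]
    exact mul_le_mul (exp_le_exp.2 (by gcongr; exact hy.2))
      (le_pow_mul_of_mem_Ioc hM hC hv hflat hy hyr) (hv0 y) (exp_nonneg _)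
  calc _ ≤ B * g.real (Ioc (M / 2 + j * M) (M / 2 + (j + 1) * M) ∩ Ioc M r) :=
        (le_norm_self _).trans (norm_setIntegral_le_of_norm_le_const (measure_lt_top _ _) hbound)
    _ ≤ B * (exp (-a * M / 2) ^ (j + 1) * g.real (Ioi (M / 2))) := by
        have : 0 ≤ B := by have := hv0 (M / 2); positivity
        gcongr
        exact measureReal_Ioc_inter_Ioc_le hM hdecay j
    _ = exp (a * (M / 2 + (j + 1) * M) / 8) * exp (-a * M / 2) ^ (j + 1) * C ^ (j + 1) *
          (v (M / 2) * g.real (Ioi (M / 2))) := by ring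
    _ ≤ exp (-a * M / 4) ^ (j + 1) * C ^ (j + 1) * (v (M / 2) * g.real (Ioi (M / 2))) := by
        have := hv0 (M / 2)
        gcongr
        exact exp_mul_exp_pow_le ha hM.le j
    _ = _ := by ring

theorem mul_measureReal_Ioc_le_setIntegral_Iic [IsFiniteMeasure g] (hv : Monotone v)
    (hv0 : ∀ y, 0 ≤ v y) (s t : ℝ) :
    v s * g.real (Ioc s t) ≤ ∫ y in Iic t, v y ∂g := by
  have hint : IntegrableOn v (Iic t) g :=
    Measure.integrableOn_of_bounded (measure_ne_top _ _) hv.measurable.aestronglyMeasurable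
      (ae_restrict_of_forall_mem measurableSet_Iic fun y hy => by
        rw [Real.norm_of_nonneg (hv0 y)]; exact hv hy)
  calc v s * g.real (Ioc s t) ≤ ∫ y in Ioc s t, v y ∂g :=
        setIntegral_ge_of_const_le_real measurableSet_Ioc (measure_ne_top _ _)
          (fun y hy => hv hy.1.le) (hint.mono_set Ioc_subset_Iic_self)
    _ ≤ ∫ y in Iic t, v y ∂g :=
        setIntegral_mono_set hint (ae_of_all _ hv0) Ioc_subset_Iic_self.eventuallyLE

theorem setIntegral_Ioc_exp_mul_le [IsFiniteMeasure g] (ha : 0 ≤ a) (hM : 0 < M) (hC : 0 ≤ C)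
    (hρ : C * exp (-a * M / 4) < 1) (hv : Monotone v) (hv0 : ∀ y, 0 ≤ v y)
    (hflat : ∀ y ∈ Icc (M / 2) r, v (y + M) ≤ C * v y)
    (hdecay : ∀ x, 0 ≤ x → g.real (Ioi (x + M / 2)) ≤ exp (-a * M / 2) * g.real (Ioi x)) :
    ∫ y in Ioc M r, exp (a * y / 8) * v y ∂g ≤
      C * exp (-a * M / 4) / (1 - C * exp (-a * M / 4)) * (v (M / 2) * g.real (Ioi (M / 2))) := by
  set ρ := C * exp (-a * M / 4)
  have hmono : Monotone fun y => exp (a * y / 8) * v y :=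
    Monotone.mul (fun y z hyz => exp_le_exp.2 (by gcongr)) hv (fun _ => exp_nonneg _) hv0
  have hint : IntegrableOn (fun y => exp (a * y / 8) * v y) (Ioc M r) g :=
    ((hmono.monotoneOn _).integrableOn_isCompact isCompact_Icc).mono_set Ioc_subset_Icc_self
  have hgeom := (hasSum_geometric_of_lt_one (by positivity) hρ).mul_left
    (ρ * (v (M / 2) * g.real (Ioi (M / 2))))
  refine (hasSum_le (fun j => ?_) (hasSum_setIntegral_inter_Ioc_add_nat_mul hM measurableSet_Ioc
    (Ioc_subset_Ioi_self.trans (Ioi_subset_Ioi (half_le_self hM.le))) hint) hgeom).trans_eq ?_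
  · exact (setIntegral_Ioc_inter_Ioc_exp_mul_le ha hM hC hv hv0 hflat hdecay j).trans_eq (by ring)
  · rw [div_eq_mul_inv]; ring

theorem one_sub_exp_mul_le_setIntegral_Iic [IsFiniteMeasure g] (hM : 0 < M) (hv : Monotone v)
    (hv0 : ∀ y, 0 ≤ v y)
    (hdecay : ∀ x, 0 ≤ x → g.real (Ioi (x + M / 2)) ≤ exp (-a * M / 2) * g.real (Ioi x)) :
    (1 - exp (-a * M / 2)) * (v (M / 2) * g.real (Ioi (M / 2))) ≤ ∫ y in Iic M, v y ∂g := by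
  have htail : g.real (Ioi M) ≤ exp (-a * M / 2) * g.real (Ioi (M / 2)) := by
    simpa using hdecay (M / 2) (by positivity)
  have hIoc : g.real (Ioc (M / 2) M) = g.real (Ioi (M / 2)) - g.real (Ioi M) := by
    rw [← Ioi_sdiff_Ioi, measureReal_sdiff (Ioi_subset_Ioi (by linarith)) measurableSet_Ioi]
  calc (1 - exp (-a * M / 2)) * (v (M / 2) * g.real (Ioi (M / 2)))
      ≤ v (M / 2) * g.real (Ioc (M / 2) M) := by
        rw [hIoc]; have := hv0 (M / 2); nlinarith
    _ ≤ ∫ y in Iic M, v y ∂g := mul_measureReal_Ioc_le_setIntegral_Iic hv hv0 _ _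

end Blocks

theorem stmt_19_general
    (k₀ : ℕ) (hk₀ : 1 < k₀)
    (a M₀ M : ℝ) (ha : 0 < a) (hM₀ : 0 < M₀)
    (hM : 4 * M₀ < M)
    (hM' : (4 * (k₀ : ℝ)) ^ 4 * Real.exp (-a * M / 2) ≤ 1 / 100)
    (g : Measure ℝ) (hg : IsProbabilityMeasure g)
    (hgdecay : ∀ M' x : ℝ, M₀ < M' → 0 ≤ x →
      (g (Ioi (x + M'))).toReal ≤ Real.exp (-a * M') * (g (Ioi x)).toReal)
    (u : ℝ → ℝ) (hu01 : ∀ x, u x ∈ Icc (0 : ℝ) 1) (huanti : Antitone u)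
    (x₁ x₂ : ℝ) (hx₂ : x₂ = x₁ - M)
    (r : ℝ)
    (hflat : ∀ y : ℝ, y ∈ Icc (M / 2) r → u (x₂ - y) ≤ (4 * (k₀ : ℝ)) ^ 2 * u (x₁ - y)) :
    ∫ y in Ioc M r, Real.exp (a * y / 8) * u (x₁ - y) ∂g ≤
      ∫ y in Iic M, u (x₁ - y) ∂g := by
  set C : ℝ := (4 * (k₀ : ℝ)) ^ 2
  have hMpos : 0 < M := by linarith
  have hC : 1 ≤ C := by
    have : (2 : ℝ) ≤ k₀ := by exact_mod_cast hk₀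
    nlinarith
  have hCq : C ^ 2 * exp (-a * M / 2) ≤ 1 / 100 := by rw [← pow_mul]; exact hM'
  have hq : exp (-a * M / 2) ≤ 1 / 100 :=
    (le_mul_of_one_le_left (exp_nonneg _) (one_le_pow₀ hC)).trans hCq
  have hρ : C * exp (-a * M / 4) ≤ 1 / 10 := by
    have hsq : (C * exp (-a * M / 4)) ^ 2 = C ^ 2 * exp (-a * M / 2) := by
      rw [mul_pow, ← exp_nat_mul]; ring_nf
    nlinarith [exp_pos (-a * M / 4)]
  have hv : Monotone fun y => u (x₁ - y) := fun y z hyz => huanti (by linarith)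
  have hv0 : ∀ y, 0 ≤ u (x₁ - y) := fun y => (hu01 _).1
  have hflat' : ∀ y ∈ Icc (M / 2) r, u (x₁ - (y + M)) ≤ C * u (x₁ - y) := fun y hy => by
    rw [show x₁ - (y + M) = x₂ - y by rw [hx₂]; ring]; exact hflat y hy
  have hdecay : ∀ x, 0 ≤ x → g.real (Ioi (x + M / 2)) ≤ exp (-a * M / 2) * g.real (Ioi x) :=
    fun x hx => by rw [mul_div_assoc]; exact hgdecay (M / 2) x (by linarith) hx
  have hc : 0 ≤ u (x₁ - M / 2) * g.real (Ioi (M / 2)) := mul_nonneg (hv0 _) measureReal_nonneg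
  calc _ ≤ _ := setIntegral_Ioc_exp_mul_le ha.le hMpos (by positivity) (by linarith) hv hv0
        hflat' hdecay
    _ ≤ (1 - exp (-a * M / 2)) * (u (x₁ - M / 2) * g.real (Ioi (M / 2))) := by
        gcongr
        have : 0 ≤ exp (-a * M / 2) * (C * exp (-a * M / 4)) := by positivity
        rw [div_le_iff₀ (by linarith)]
        nlinarith
    _ ≤ _ := one_sub_exp_mul_le_setIntegral_Iic hMpos hv hv0 hdecay

/-- Let `k₀ > 1` be an integer, `a > 0`, `M₀ > 0` and `M` with
`M > 4·M₀` and `(4k₀)⁴·e^{−aM/2} ≤ 1/100`.  Let `g` be a Borel probability measure on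
`ℝ` with tail `ḡ(x) = g((x,∞))` satisfying `ḡ(x+M') ≤ e^{−aM'}·ḡ(x)` for `M' > M₀`,
`x ≥ 0`.  Let `u : ℝ → [0,1]` be nonincreasing, `x₂ = x₁ − M`, and `r > M` with
`u(x₂−y) ≤ (4k₀)²·u(x₁−y)` for all `y ∈ [M/2, r]`.  Then
`∫_{(M,r]} e^{a·y/8}·u(x₁−y) dg(y) ≤ ∫_{(−∞,M]} u(x₁−y) dg(y)`. -/
theorem stmt_19
    (k₀ : ℕ) (hk₀ : 1 < k₀)
    (a M₀ M : ℝ) (ha : 0 < a) (hM₀ : 0 < M₀)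
    (hM : 4 * M₀ < M)
    (hM' : (4 * (k₀ : ℝ)) ^ 4 * Real.exp (-a * M / 2) ≤ 1 / 100)
    (g : Measure ℝ) (hg : IsProbabilityMeasure g)
    (hgdecay : ∀ M' x : ℝ, M₀ < M' → 0 ≤ x →
      (g (Ioi (x + M'))).toReal ≤ Real.exp (-a * M') * (g (Ioi x)).toReal)
    (u : ℝ → ℝ) (hu01 : ∀ x, u x ∈ Icc (0 : ℝ) 1) (huanti : Antitone u)
    (x₁ x₂ : ℝ) (hx₂ : x₂ = x₁ - M)
    (r : ℝ) (hr : M < r)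
    (hflat : ∀ y : ℝ, y ∈ Icc (M / 2) r → u (x₂ - y) ≤ (4 * (k₀ : ℝ)) ^ 2 * u (x₁ - y)) :
    ∫ y in Ioc M r, Real.exp (a * y / 8) * u (x₁ - y) ∂g ≤
      ∫ y in Iic M, u (x₁ - y) ∂g :=
  stmt_19_general k₀ hk₀ a M₀ M ha hM₀ hM hM' g hg hgdecay u hu01 huanti x₁ x₂ hx₂ r hflat
end
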